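/- arXiv:math/0409200 — 11 statements merged into one kernel-verified Lean document; each statement's English description precedes it below -/
import Mathlib

section
/- If C₁ and C₂ are two convex bodies in the plane, both containing the origin in their interiors, such that for every nonzero vector v the points where the ray {λv : λ ≥ 0} meets the boundaries of C₁ and C₂ have parallel supporting lines, then C₁ = λC₂ for some λ > 0. -/
/-!
Write `p₁`, `p₂` for the gauges of `C₁`, `C₂`. A functional `φ` supporting both bodies where
the ray through `v` leaves them gives linear minorants `φ / c₁ ≤ p₁` and `φ / c₂ ≤ p₂`, both
touching at `v`. Restricted to a segment avoiding the origin, `p₁` and `p₂` are Lipschitz, hence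
differentiable almost everywhere, and wherever both are differentiable their derivatives are read
off the same functional `φ`, so `(p₁ / p₂)' = 0` there. Since `p₂` is bounded away from `0` on the
segment, `p₁ / p₂` is Lipschitz, hence absolutely continuous, hence constant. In dimension at least
two any two nonzero vectors are joined by at most two such segments, so `p₁ = ρ • p₂` for some
`ρ > 0`, that is `C₁ = ρ⁻¹ • C₂`.
-/

open Set Filter Topology Pointwise

lemma LipschitzOnWith.inv_of_le {α : Type*} [PseudoMetricSpace α] {f : α → ℝ} {K : NNReal}
    {s : Set α} {ε : ℝ} (hf : LipschitzOnWith K f s) (hε : 0 < ε) (hfε : ∀ x ∈ s, ε ≤ f x) :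
    LipschitzOnWith (K / Real.toNNReal (ε ^ 2)) (fun x => (f x)⁻¹) s := by
  refine LipschitzOnWith.of_dist_le_mul fun x hx y hy => ?_
  have hx' : 0 < f x := hε.trans_le (hfε x hx)
  have hy' : 0 < f y := hε.trans_le (hfε y hy)
  have hε2 : ε ^ 2 ≤ f x * f y := by nlinarith [hfε x hx, hfε y hy]
  rw [NNReal.coe_div, Real.coe_toNNReal _ (by positivity), Real.dist_eq,
    inv_sub_inv hx'.ne' hy'.ne', abs_div, abs_of_pos (mul_pos hx' hy'), abs_sub_comm,
    ← Real.dist_eq, div_mul_eq_mul_div]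
  exact div_le_div₀ (by positivity) (hf.dist_le_mul x hx y hy) (by positivity) hε2

lemma ContinuousLinearMap.pos_of_forall_le_of_mem_nhds_zero {V : Type*} [AddCommGroup V]
    [TopologicalSpace V] [Module ℝ V] [ContinuousSMul ℝ V] {C : Set V} (hC : C ∈ 𝓝 0)
    {φ : V →L[ℝ] ℝ} (hφ : φ ≠ 0) {m : ℝ} (hm : ∀ y ∈ C, φ y ≤ m) : 0 < m := by
  obtain ⟨w, hw⟩ : ∃ w, 0 < φ w := by
    obtain ⟨w, hw⟩ := DFunLike.ne_iff.1 hφ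
    rcases hw.lt_or_gt with h | h
    · exact ⟨-w, by simpa using h⟩
    · exact ⟨w, h⟩
  have hsmul : Tendsto (fun t : ℝ => t • w) (𝓝[>] 0) (𝓝 0) := by
    refine ((Continuous.tendsto' ?_ (0 : ℝ) (0 : V) (by simp)).mono_left nhdsWithin_le_nhds)
    fun_prop
  obtain ⟨t, htC, ht⟩ := ((hsmul.eventually hC).and self_mem_nhdsWithin).exists
  calc 0 < t * φ w := mul_pos ht hw
    _ = φ (t • w) := by simp
    _ ≤ m := hm _ htC

lemma le_mul_gauge_of_forall_le {V : Type*} [AddCommGroup V] [Module ℝ V] {C : Set V}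
    (hC : Absorbent ℝ C) {φ : V →ₗ[ℝ] ℝ} {m : ℝ} (hm : ∀ y ∈ C, φ y ≤ m) (x : V) :
    φ x ≤ m * gauge C x := by
  have hm0 : 0 ≤ m := by simpa using hm 0 hC.zero_mem
  have hlim : Tendsto (fun r => m * r) (𝓝[>] (gauge C x)) (𝓝 (m * gauge C x)) :=
    ((continuous_const.mul continuous_id).tendsto _).mono_left nhdsWithin_le_nhds
  refine ge_of_tendsto hlim (eventually_nhdsWithin_of_forall fun r hr => ?_)
  obtain ⟨b, hb, hbr, y, hy, rfl⟩ := exists_lt_of_gauge_lt hC hr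
  calc φ (b • y) = b * φ y := by simp
    _ ≤ b * m := by gcongr; exact hm y hy
    _ ≤ m * r := by nlinarith

def TouchesFromBelow {α : Type*} (h f : α → ℝ) (t : α) : Prop :=
  (∀ s, h s ≤ f s) ∧ h t = f t

lemma TouchesFromBelow.comp {α β : Type*} {h f : β → ℝ} {γ : α → β} {t : α}
    (hhf : TouchesFromBelow h f (γ t)) : TouchesFromBelow (h ∘ γ) (f ∘ γ) t :=
  ⟨fun s => hhf.1 (γ s), hhf.2⟩

lemma TouchesFromBelow.hasDerivAt_eq {h f : ℝ → ℝ} {h' f' t : ℝ}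
    (hhf : TouchesFromBelow h f t) (hh : HasDerivAt h h' t) (hf : HasDerivAt f f' t) :
    f' = h' := by
  have hmin : IsLocalMin (fun s => f s - h s) t :=
    Eventually.of_forall fun s => by simp only [hhf.2, sub_self, sub_nonneg, hhf.1 s]
  linarith [hmin.hasDerivAt_eq_zero (hf.sub hh)]

lemma hasDerivAt_div_eq_zero_of_touchesFromBelow {f₁ f₂ h : ℝ → ℝ} {f₁' f₂' h' t c₁ c₂ : ℝ}
    (hc₁ : 0 < c₁) (hc₂ : 0 < c₂) (hf₂t : f₂ t ≠ 0)
    (hf₁ : HasDerivAt f₁ f₁' t) (hf₂ : HasDerivAt f₂ f₂' t) (hh : HasDerivAt h h' t)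
    (h₁ : TouchesFromBelow h (c₁ • f₁) t) (h₂ : TouchesFromBelow h (c₂ • f₂) t) :
    HasDerivAt (fun s => f₁ s / f₂ s) 0 t := by
  have d₁ : c₁ * f₁' = h' := h₁.hasDerivAt_eq hh (hf₁.const_mul c₁)
  have d₂ : c₂ * f₂' = h' := h₂.hasDerivAt_eq hh (hf₂.const_mul c₂)
  have e₁ : c₁ * f₁ t = h t := h₁.2.symm
  have e₂ : c₂ * f₂ t = h t := h₂.2.symm
  -- `(c₁ f₁, c₁ f₁')` and `(c₂ f₂, c₂ f₂')` both equal `(h t, h')`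
  have hnum : f₁' * f₂ t - f₁ t * f₂' = 0 := by
    have : c₁ * c₂ * (f₁' * f₂ t - f₁ t * f₂') = 0 := by
      linear_combination (c₂ * f₂ t) * d₁ + h' * e₂ - (c₂ * f₂') * e₁ - h t * d₂
    simpa [hc₁.ne', hc₂.ne'] using this
  have := hf₁.div hf₂ hf₂t
  rwa [hnum, zero_div] at this

lemma Submodule.exists_notMem_span_singleton {K V : Type*} [DivisionRing K] [AddCommGroup V]
    [Module K V] (hV : 1 < Module.finrank K V) (x : V) : ∃ z, z ∉ K ∙ x := by
  refine SetLike.exists_not_mem_of_ne_top _ fun h => ?_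
  have := finrank_span_le_card (R := K) ({x} : Set V)
  rw [h, finrank_top] at this
  simp only [Set.toFinset_singleton, Finset.card_singleton] at this
  omega

lemma AffineMap.lineMap_ne_zero_of_notMem_span_singleton {K W : Type*} [Field K] [AddCommGroup W]
    [Module K W] {x z : W} (hx : x ≠ 0) (hz : z ∉ K ∙ x) (t : K) : lineMap x z t ≠ 0 := by
  rw [lineMap_apply_module]
  intro h
  rcases eq_or_ne t 0 with rfl | ht
  · simp [hx] at h
  · refine hz (Submodule.mem_span_singleton.2 ⟨-(t⁻¹ * (1 - t)), ?_⟩)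
    rw [neg_smul, mul_smul, ← smul_neg, ← eq_neg_of_add_eq_zero_right h, inv_smul_smul₀ ht]

section

variable {V : Type*} [NormedAddCommGroup V] [NormedSpace ℝ V]

/-- For gauges `g₁ = gauge C₁`, `g₂ = gauge C₂` this says that `C₁` and `C₂` have parallel
supporting lines (both given by `φ`) where the ray through `v` leaves them. -/
def HaveParallelSupportAt (g₁ g₂ : V → ℝ) (v : V) : Prop :=
  ∃ φ : V →L[ℝ] ℝ, ∃ c₁ c₂ : ℝ, 0 < c₁ ∧ 0 < c₂ ∧
    TouchesFromBelow φ (c₁ • g₁) v ∧ TouchesFromBelow φ (c₂ • g₂) v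

lemma div_eq_div_of_haveParallelSupportAt_segment {g₁ g₂ : V → ℝ} {K₁ K₂ : NNReal}
    (hg₁ : LipschitzWith K₁ g₁) (hg₂ : LipschitzWith K₂ g₂) {x y : V}
    (hpos : ∀ t ∈ Icc (0 : ℝ) 1, 0 < g₂ (AffineMap.lineMap x y t))
    (hsupp : ∀ t ∈ Icc (0 : ℝ) 1, HaveParallelSupportAt g₁ g₂ (AffineMap.lineMap x y t)) :
    g₁ x / g₂ x = g₁ y / g₂ y := by
  set γ : ℝ → V := ⇑(AffineMap.lineMap (k := ℝ) x y)
  have hf₁ := hg₁.comp (lipschitzWith_lineMap (𝕜 := ℝ) x y)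
  have hf₂ := hg₂.comp (lipschitzWith_lineMap (𝕜 := ℝ) x y)
  obtain ⟨t₀, ht₀, hmin⟩ := isCompact_Icc.exists_isMinOn (nonempty_Icc.2 zero_le_one)
    hf₂.continuous.continuousOn
  have hAC : AbsolutelyContinuousOnInterval (fun t => g₁ (γ t) / g₂ (γ t)) 0 1 := by
    simp only [div_eq_mul_inv]
    have hinv := hf₂.lipschitzOnWith.inv_of_le (hpos t₀ ht₀) fun t ht => hmin ht
    rw [← uIcc_of_le zero_le_one] at hinv
    exact hf₁.lipschitzOnWith.absolutelyContinuousOnInterval.fun_mul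
      hinv.absolutelyContinuousOnInterval
  obtain ⟨c, hc⟩ := hAC.const_of_ae_hasDerivAt_zero <| by
    filter_upwards [hf₁.ae_differentiableAt_real, hf₂.ae_differentiableAt_real] with t hd₁ hd₂ ht
    rw [uIcc_of_le zero_le_one] at ht
    obtain ⟨φ, c₁, c₂, hc₁, hc₂, h₁, h₂⟩ := hsupp t ht
    exact hasDerivAt_div_eq_zero_of_touchesFromBelow hc₁ hc₂ (hpos t ht).ne' hd₁.hasDerivAt
      hd₂.hasDerivAt (φ.hasFDerivAt.comp_hasDerivAt t AffineMap.hasDerivAt_lineMap) h₁.comp h₂.comp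
  have h0 := hc 0 (by simp)
  have h1 := hc 1 (by simp)
  simp only [γ, AffineMap.lineMap_apply_zero, AffineMap.lineMap_apply_one] at h0 h1
  rw [h0, h1]

lemma div_eq_div_of_haveParallelSupportAt {g₁ g₂ : V → ℝ} {K₁ K₂ : NNReal}
    (hV : 1 < Module.finrank ℝ V) (hg₁ : LipschitzWith K₁ g₁) (hg₂ : LipschitzWith K₂ g₂)
    (hpos : ∀ v ≠ 0, 0 < g₂ v) (hsupp : ∀ v ≠ 0, HaveParallelSupportAt g₁ g₂ v)
    {x y : V} (hx : x ≠ 0) (hy : y ≠ 0) : g₁ x / g₂ x = g₁ y / g₂ y := by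
  have key : ∀ {x z : V}, x ≠ 0 → z ∉ ℝ ∙ x → g₁ x / g₂ x = g₁ z / g₂ z := fun hx hz =>
    have hne := AffineMap.lineMap_ne_zero_of_notMem_span_singleton hx hz
    div_eq_div_of_haveParallelSupportAt_segment hg₁ hg₂ (fun t _ => hpos _ (hne t))
      (fun t _ => hsupp _ (hne t))
  obtain ⟨z, hz⟩ := Submodule.exists_notMem_span_singleton hV x
  by_cases hyx : y ∈ ℝ ∙ x
  · have hzy : z ∉ ℝ ∙ y := fun h => hz ((Submodule.span_singleton_le_iff_mem _ _).2 hyx h)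
    rw [key hx hz, key hy hzy]
  · exact key hx hyx

lemma gauge_pos_of_isBounded {C : Set V} (hC : C ∈ 𝓝 0) (hCb : Bornology.IsBounded C) {v : V}
    (hv : v ≠ 0) : 0 < gauge C v :=
  (gauge_pos (absorbent_nhds_zero hC) (NormedSpace.isVonNBounded_of_isBounded ℝ hCb)).2 hv

lemma inv_gauge_smul_mem_frontier {C : Set V} (hCv : Convex ℝ C) (hC : C ∈ 𝓝 0) {v : V}
    (hv : gauge C v ≠ 0) : (gauge C v)⁻¹ • v ∈ frontier C := by
  rw [← gauge_eq_one_iff_mem_frontier hCv hC,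
    gauge_smul_of_nonneg (inv_nonneg.2 (gauge_nonneg v)), smul_eq_mul, inv_mul_cancel₀ hv]

lemma touchesFromBelow_gauge {C : Set V} (hC : C ∈ 𝓝 0) {φ : V →L[ℝ] ℝ} (hφ : φ ≠ 0) {v : V}
    (hv : gauge C v ≠ 0) (hsupp : ∀ x ∈ C, φ x ≤ φ ((gauge C v)⁻¹ • v)) :
    0 < φ ((gauge C v)⁻¹ • v) ∧ TouchesFromBelow φ (φ ((gauge C v)⁻¹ • v) • gauge C) v := by
  refine ⟨φ.pos_of_forall_le_of_mem_nhds_zero hC hφ hsupp,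
    fun x => le_mul_gauge_of_forall_le (absorbent_nhds_zero hC) (φ := φ.toLinearMap) hsupp x, ?_⟩
  simp only [Pi.smul_apply, smul_eq_mul, map_smul]
  field_simp

lemma haveParallelSupportAt_gauge {C₁ C₂ : Set V}
    (h₁v : Convex ℝ C₁) (h₁n : C₁ ∈ 𝓝 0) (h₁b : Bornology.IsBounded C₁)
    (h₂v : Convex ℝ C₂) (h₂n : C₂ ∈ 𝓝 0) (h₂b : Bornology.IsBounded C₂)
    (hpar : ∀ v : V, v ≠ 0 → ∀ a b : V, a ∈ frontier C₁ → b ∈ frontier C₂ →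
      (∃ s : ℝ, 0 ≤ s ∧ a = s • v) → (∃ t : ℝ, 0 ≤ t ∧ b = t • v) →
      ∃ φ : V →L[ℝ] ℝ, φ ≠ 0 ∧ (∀ x ∈ C₁, φ x ≤ φ a) ∧ (∀ x ∈ C₂, φ x ≤ φ b))
    {v : V} (hv : v ≠ 0) : HaveParallelSupportAt (gauge C₁) (gauge C₂) v := by
  have hpos : ∀ {C : Set V}, C ∈ 𝓝 0 → Bornology.IsBounded C → gauge C v ≠ 0 := fun hC hCb =>
    (gauge_pos_of_isBounded hC hCb hv).ne'
  have hray : ∀ {C : Set V}, ∃ s : ℝ, 0 ≤ s ∧ (gauge C v)⁻¹ • v = s • v :=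
    ⟨_, inv_nonneg.2 (gauge_nonneg v), rfl⟩
  obtain ⟨φ, hφ, h₁, h₂⟩ := hpar v hv _ _ (inv_gauge_smul_mem_frontier h₁v h₁n (hpos h₁n h₁b))
    (inv_gauge_smul_mem_frontier h₂v h₂n (hpos h₂n h₂b)) hray hray
  obtain ⟨hc₁, ht₁⟩ := touchesFromBelow_gauge h₁n hφ (hpos h₁n h₁b) h₁
  obtain ⟨hc₂, ht₂⟩ := touchesFromBelow_gauge h₂n hφ (hpos h₂n h₂b) h₂
  exact ⟨φ, _, _, hc₁, hc₂, ht₁, ht₂⟩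

lemma IsClosed.mem_iff_gauge_le_one {C : Set V} (hCc : IsClosed C) (hCv : Convex ℝ C)
    (hC : C ∈ 𝓝 0) {x : V} : x ∈ C ↔ gauge C x ≤ 1 := by
  rw [gauge_le_one_iff_mem_closure hCv hC, hCc.closure_eq]

lemma eq_inv_smul_of_gauge_eq_smul_gauge {C₁ C₂ : Set V} (h₁c : IsClosed C₁) (h₁v : Convex ℝ C₁)
    (h₁n : C₁ ∈ 𝓝 0) (h₂c : IsClosed C₂) (h₂v : Convex ℝ C₂) (h₂n : C₂ ∈ 𝓝 0) {ρ : ℝ} (hρ : 0 < ρ)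
    (h : gauge C₁ = ρ • gauge C₂) : C₁ = ρ⁻¹ • C₂ := by
  ext x
  rw [Set.mem_inv_smul_set_iff₀ hρ.ne', h₁c.mem_iff_gauge_le_one h₁v h₁n,
    h₂c.mem_iff_gauge_le_one h₂v h₂n, h, gauge_smul_of_nonneg hρ.le]
  rfl

lemma gauge_eq_smul_gauge_of_haveParallelSupportAt {C₁ C₂ : Set V} (hV : 1 < Module.finrank ℝ V)
    (h₁v : Convex ℝ C₁) (h₁n : C₁ ∈ 𝓝 0) (h₂v : Convex ℝ C₂) (h₂n : C₂ ∈ 𝓝 0)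
    (h₂b : Bornology.IsBounded C₂)
    (hsupp : ∀ v ≠ 0, HaveParallelSupportAt (gauge C₁) (gauge C₂) v)
    {v₀ : V} (hv₀ : v₀ ≠ 0) : gauge C₁ = (gauge C₁ v₀ / gauge C₂ v₀) • gauge C₂ := by
  have hpos : ∀ v ≠ 0, 0 < gauge C₂ v := fun v => gauge_pos_of_isBounded h₂n h₂b
  obtain ⟨K₁, hK₁⟩ := h₁v.lipschitz_gauge h₁n
  obtain ⟨K₂, hK₂⟩ := h₂v.lipschitz_gauge h₂n
  ext x
  rcases eq_or_ne x 0 with rfl | hx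
  · simp [gauge_zero]
  · rw [div_eq_div_of_haveParallelSupportAt hV hK₁ hK₂ hpos hsupp hv₀ hx, Pi.smul_apply,
      smul_eq_mul, div_mul_cancel₀ _ (hpos x hx).ne']

end

/-- If two convex bodies in the plane, both containing the origin in their interiors, are
such that the points where each ray from the origin meets their boundaries have parallel
supporting lines, then the bodies are positive multiples of one another. -/
theorem stmt0 {V : Type*} [NormedAddCommGroup V] [NormedSpace ℝ V]
    (hdim : Module.finrank ℝ V = 2)
    (C₁ C₂ : Set V)
    (h₁c : IsCompact C₁) (h₁v : Convex ℝ C₁) (h₁i : (0 : V) ∈ interior C₁)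
    (h₂c : IsCompact C₂) (h₂v : Convex ℝ C₂) (h₂i : (0 : V) ∈ interior C₂)
    (hpar : ∀ v : V, v ≠ 0 → ∀ a b : V, a ∈ frontier C₁ → b ∈ frontier C₂ →
      (∃ s : ℝ, 0 ≤ s ∧ a = s • v) → (∃ t : ℝ, 0 ≤ t ∧ b = t • v) →
      ∃ φ : V →L[ℝ] ℝ, φ ≠ 0 ∧ (∀ x ∈ C₁, φ x ≤ φ a) ∧ (∀ x ∈ C₂, φ x ≤ φ b)) :
    ∃ l : ℝ, 0 < l ∧ C₁ = (fun x : V => l • x) '' C₂ := by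
  have hV : 1 < Module.finrank ℝ V := by omega
  have : Nontrivial V := Module.nontrivial_of_finrank_pos (by omega : 0 < Module.finrank ℝ V)
  obtain ⟨v₀, hv₀⟩ := exists_ne (0 : V)
  have h₁n := mem_interior_iff_mem_nhds.1 h₁i
  have h₂n := mem_interior_iff_mem_nhds.1 h₂i
  have hgauge := gauge_eq_smul_gauge_of_haveParallelSupportAt hV h₁v h₁n h₂v h₂n h₂c.isBounded
    (fun v hv => haveParallelSupportAt_gauge h₁v h₁n h₁c.isBounded h₂v h₂n h₂c.isBounded hpar hv)
    hv₀
  have hρ : 0 < gauge C₁ v₀ / gauge C₂ v₀ := div_pos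
    (gauge_pos_of_isBounded h₁n h₁c.isBounded hv₀) (gauge_pos_of_isBounded h₂n h₂c.isBounded hv₀)
  simp only [image_smul]
  exact ⟨_, inv_pos.2 hρ,
    eq_inv_smul_of_gauge_eq_smul_gauge h₁c.isClosed h₁v h₁n h₂c.isClosed h₂v h₂n hρ hgauge⟩
end

section
/- A nondegenerate bilinear form [·,·] on a real vector space satisfies ([x,y]=0 ⟺ [y,x]=0 for all x,y) if and only if either [x,x]=0 for all x (the form is symplectic/alternating) or [x,y]=[y,x] for all x,y (the form is symmetric). -/
/-- A nondegenerate bilinear form on a real vector space is reflexive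
(`B x y = 0 ↔ B y x = 0`) if and only if it is alternating or symmetric. -/
theorem stmt2 {V : Type*} [AddCommGroup V] [Module ℝ V]
    (B : V →ₗ[ℝ] V →ₗ[ℝ] ℝ)
    (hnd : ∀ a : V, (∀ y : V, B a y = 0) → a = 0) :
    (∀ x y : V, B x y = 0 ↔ B y x = 0) ↔
      ((∀ x : V, B x x = 0) ∨ (∀ x y : V, B x y = B y x)) := by
  constructor
  · intro hrefl
    have star : ∀ u v w : V, B u v * B w u = B u w * B v u := by
      intro u v w
      have h0 : B u (B u v • w - B u w • v) = 0 := by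
        simp only [map_sub, map_smul, smul_eq_mul]
        ring
      have h1 := (hrefl u _).mp h0
      simp only [map_sub, map_smul, LinearMap.sub_apply, LinearMap.smul_apply,
        smul_eq_mul, sub_eq_zero] at h1
      exact h1
    have key : ∀ a : V, B a a ≠ 0 → ∀ v, B a v = B v a := by
      intro a ha v
      have h := star a v a
      exact mul_right_cancel₀ ha (by linarith [h])
    by_cases halt : ∀ x, B x x = 0
    · exact Or.inl halt
    · right
      push_neg at halt
      obtain ⟨a, ha⟩ := halt
      have hsym : ∀ x : V, B x x ≠ 0 → ∀ v, B x v = B v x := key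
      intro x y
      by_cases hx : B x x = 0
      · have hax : B a x = B x a := key a ha x
        -- pick t = 1 or -1 so that B (x + t•a) (x + t•a) ≠ 0
        have hpick : ∃ t : ℝ, 2 * t * B x a + t ^ 2 * B a a ≠ 0 := by
          by_cases h1 : 2 * B x a + B a a = 0
          · exact ⟨-1, by intro h; apply ha; nlinarith⟩
          · exact ⟨1, by intro h; apply h1; nlinarith⟩
        obtain ⟨t, ht⟩ := hpick
        set c := x + t • a with hc
        have hcc : B c c = 2 * t * B x a + t ^ 2 * B a a := by
          simp only [hc, map_add, map_smul, LinearMap.add_apply, LinearMap.smul_apply,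
            smul_eq_mul, hx, hax]
          ring
        have hcne : B c c ≠ 0 := by rw [hcc]; exact ht
        have h1 := key c hcne y
        have h2 := key a ha y
        simp only [hc, map_add, map_smul, LinearMap.add_apply, LinearMap.smul_apply,
          smul_eq_mul] at h1
        rw [h2] at h1
        linarith [h1]
      · exact key x hx y
  · rintro (halt | hsymm) x y
    · have hskew : B x y = - B y x := by
        have h := halt (x + y)
        simp only [map_add, LinearMap.add_apply, halt x, halt y] at h
        linarith
      constructor <;> intro h <;> linarith [hskew]
    · rw [hsymm x y]
end

section
/- The antinorm of the antinorm equals the original norm: for all x ∈ V, sup{[x,y] : ‖y‖ₐ = 1} = ‖x‖, where ‖y‖ₐ = sup{[y,z] : ‖z‖ = 1}. -/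
/-! Since the unit sphere is symmetric, the antinorm of `y` is the dual norm of the functional
`ω y`. A nondegenerate form identifies `V` with its dual, and by skew-symmetry
`ω x y = (-ω y) x`; so as `y` runs over the antinorm's unit sphere, `ω x y` runs over the values
at `x` of the unit dual functionals, whose supremum is `‖x‖` by Hahn–Banach. -/

/-- The antinorm associated with a norm and a symplectic form `ω`:
`anorm ω x = sup {ω x y : ‖y‖ = 1}`. -/
noncomputable def anorm {V : Type*} [NormedAddCommGroup V] [NormedSpace ℝ V]
    (ω : V →ₗ[ℝ] V →ₗ[ℝ] ℝ) (x : V) : ℝ :=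
  sSup {r : ℝ | ∃ y : V, ‖y‖ = 1 ∧ r = ω x y}

/-- Birkhoff normality: `x ⊣ y` iff `‖x‖ ≤ ‖x + t • y‖` for all `t`. -/
def BNormal {V : Type*} [NormedAddCommGroup V] [NormedSpace ℝ V] (x y : V) : Prop :=
  ∀ t : ℝ, ‖x‖ ≤ ‖x + t • y‖

theorem ContinuousLinearMap.sSup_apply_sphere_eq_norm {E : Type*} [NormedAddCommGroup E]
    [NormedSpace ℝ E] (f : E →L[ℝ] ℝ) : sSup {r : ℝ | ∃ z : E, ‖z‖ = 1 ∧ r = f z} = ‖f‖ := by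
  rw [← f.sSup_sphere_eq_norm]
  apply csSup_eq_csSup_of_forall_exists_le
  · rintro _ ⟨z, hz, rfl⟩
    exact ⟨‖f z‖, ⟨z, by simpa using hz, rfl⟩, Real.le_norm_self _⟩
  · rintro _ ⟨z, hz, rfl⟩
    rw [mem_sphere_zero_iff_norm] at hz
    rcases le_total 0 (f z) with h | h
    · exact ⟨f z, ⟨z, hz, rfl⟩, (Real.norm_of_nonneg h).le⟩
    · exact ⟨f (-z), ⟨-z, by rwa [norm_neg], rfl⟩, by simp [Real.norm_of_nonpos h]⟩

theorem NormedSpace.sSup_unit_strongDual_apply_eq_norm {E : Type*} [NormedAddCommGroup E]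
    [NormedSpace ℝ E] (x : E) :
    sSup {r : ℝ | ∃ g : StrongDual ℝ E, ‖g‖ = 1 ∧ r = g x} = ‖x‖ := by
  rw [← (inclusionInDoubleDualLi ℝ (E := E)).norm_map x]
  exact (inclusionInDoubleDual ℝ E x).sSup_apply_sphere_eq_norm

theorem anorm_eq_norm_toContinuousLinearMap {V : Type*} [NormedAddCommGroup V] [NormedSpace ℝ V]
    [FiniteDimensional ℝ V] (ω : V →ₗ[ℝ] V →ₗ[ℝ] ℝ) (y : V) :
    anorm ω y = ‖LinearMap.toContinuousLinearMap (ω y)‖ :=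
  (LinearMap.toContinuousLinearMap (ω y)).sSup_apply_sphere_eq_norm

theorem LinearMap.IsRefl.exists_apply_eq {K V : Type*} [Field K] [AddCommGroup V] [Module K V]
    [FiniteDimensional K V] {ω : V →ₗ[K] V →ₗ[K] K} (hω : ω.IsRefl) (hsep : ω.SeparatingLeft)
    (f : Module.Dual K V) : ∃ y, ω y = f :=
  (LinearMap.BilinForm.toDual ω (hω.nondegenerate_iff_separatingLeft.2 hsep)).surjective f

theorem setOf_apply_anorm_eq_one_eq_setOf_dual_apply {V : Type*} [NormedAddCommGroup V]
    [NormedSpace ℝ V] [FiniteDimensional ℝ V] {ω : V →ₗ[ℝ] V →ₗ[ℝ] ℝ} (hω : ω.IsAlt)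
    (hsep : ω.SeparatingLeft) (x : V) :
    {r : ℝ | ∃ y : V, anorm ω y = 1 ∧ r = ω x y} =
      {r : ℝ | ∃ g : StrongDual ℝ V, ‖g‖ = 1 ∧ r = g x} := by
  ext r
  constructor
  · rintro ⟨y, hy, rfl⟩
    refine ⟨-LinearMap.toContinuousLinearMap (ω y), ?_, ?_⟩
    · rwa [norm_neg, ← anorm_eq_norm_toContinuousLinearMap]
    · simp only [neg_apply, LinearMap.coe_toContinuousLinearMap', hω.neg]
  · rintro ⟨g, hg, rfl⟩
    obtain ⟨y, hy⟩ := hω.isRefl.exists_apply_eq hsep (-(g : V →ₗ[ℝ] ℝ))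
    have hyg : LinearMap.toContinuousLinearMap (ω y) = -g := by
      ext v
      simp [hy]
    refine ⟨y, by rw [anorm_eq_norm_toContinuousLinearMap, hyg, norm_neg, hg], ?_⟩
    rw [← hω.neg, hy, LinearMap.neg_apply, neg_neg, ContinuousLinearMap.coe_coe]

/-- The antinorm of the antinorm is the original norm:
`sup {ω x y : anorm ω y = 1} = ‖x‖`. -/
theorem stmt5 {V : Type*} [NormedAddCommGroup V] [NormedSpace ℝ V]
    (hdim : Module.finrank ℝ V = 2)
    (ω : V →ₗ[ℝ] V →ₗ[ℝ] ℝ)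
    (halt : ∀ x : V, ω x x = 0)
    (hnd : ∀ a : V, (∀ y : V, ω a y = 0) → a = 0) :
    ∀ x : V, sSup {r : ℝ | ∃ y : V, anorm ω y = 1 ∧ r = ω x y} = ‖x‖ := by
  have : FiniteDimensional ℝ V := FiniteDimensional.of_finrank_eq_succ hdim
  intro x
  rw [setOf_apply_anorm_eq_one_eq_setOf_dual_apply halt hnd,
    NormedSpace.sSup_unit_strongDual_apply_eq_norm]
end

section
/- For nonzero x, y ∈ V, x is Birkhoff-normal to y (i.e., ‖x‖ ≤ ‖x + λy‖ for all real λ) if and only if |[x,y]| = ‖x‖·‖y‖ₐ, and this holds if and only if y is Birkhoff-normal to x with respect to the antinorm. In particular, the antinorm reverses the normality relation. -/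
/-- Birkhoff normality with respect to an arbitrary norm-like function. -/
def NormalWith {V : Type*} [AddCommGroup V] [Module ℝ V] (N : V → ℝ) (x y : V) : Prop :=
  ∀ t : ℝ, N x ≤ N (x + t • y)

open Module Submodule

section TwoDimensional

variable {K V : Type*} [Field K] [AddCommGroup V] [Module K V]

theorem span_pair_eq_top_of_notMem_span_singleton (hdim : finrank K V = 2) {x y : V}
    (hx : x ≠ 0) (hy : y ∉ K ∙ x) : span K {x, y} = ⊤ := by
  have hli : LinearIndependent K ![x, y] :=
    (LinearIndependent.pair_iff' hx).2 fun a h => hy (mem_span_singleton.2 ⟨a, h⟩)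
  simpa [Matrix.range_cons, Matrix.range_empty, Set.union_singleton, Set.pair_comm] using
    hli.span_eq_top_of_card_eq_finrank (by simp [hdim])

variable {ω : V →ₗ[K] V →ₗ[K] K}

theorem LinearMap.IsAlt.span_pair_eq_top (hdim : finrank K V = 2) (hω : ω.IsAlt) {x y : V}
    (h : ω x y ≠ 0) : span K {x, y} = ⊤ := by
  refine span_pair_eq_top_of_notMem_span_singleton hdim (fun hx => h (by simp [hx])) ?_
  intro hy
  obtain ⟨c, rfl⟩ := mem_span_singleton.1 hy
  exact h (by simp [hω.self_eq_zero])

theorem LinearMap.IsAlt.mem_span_singleton_of_apply_eq_zero (hdim : finrank K V = 2)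
    (hω : ω.IsAlt) (hsep : ω.SeparatingLeft) {x y : V} (hx : x ≠ 0) (h : ω x y = 0) :
    y ∈ K ∙ x := by
  by_contra hy
  have hspan := span_pair_eq_top_of_notMem_span_singleton hdim hx hy
  refine hx (hsep x fun z => ?_)
  obtain ⟨a, b, rfl⟩ := mem_span_pair.1 (hspan ▸ mem_top : z ∈ span K {x, y})
  simp [hω.self_eq_zero, h]

end TwoDimensional

section Normality

variable {E : Type*} [NormedAddCommGroup E] [NormedSpace ℝ E]

theorem NormalWith.le_apply_zero_of_mem_span_singleton {N : E → ℝ} {u v : E}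
    (h : NormalWith N u v) (hu : u ∈ ℝ ∙ v) : N u ≤ N 0 := by
  obtain ⟨c, rfl⟩ := mem_span_singleton.1 hu
  simpa using h (-c)

theorem BNormal.abs_apply_mul_norm_le {u v z : E} (huv : BNormal u v) (f : E →ₗ[ℝ] ℝ)
    (hfv : f v = 0) (hz : z ∈ span ℝ {u, v}) : |f z| * ‖u‖ ≤ |f u| * ‖z‖ := by
  obtain ⟨a, b, rfl⟩ := mem_span_pair.1 hz
  rcases eq_or_ne a 0 with rfl | ha
  · simp only [zero_smul, zero_add, map_smul, hfv, smul_zero, abs_zero, zero_mul]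
    positivity
  have hz : a • u + b • v = a • (u + (b / a) • v) := by
    rw [smul_add, smul_smul, mul_div_cancel₀ _ ha]
  calc |f (a • u + b • v)| * ‖u‖ = |f u| * (|a| * ‖u‖) := by
        simp only [map_add, map_smul, smul_eq_mul, hfv, mul_zero, add_zero, abs_mul]
        ring
    _ ≤ |f u| * (|a| * ‖u + (b / a) • v‖) := by gcongr; exact huv _
    _ = |f u| * ‖a • u + b • v‖ := by rw [hz, norm_smul, Real.norm_eq_abs]

theorem bNormal_iff_abs_apply_eq {u v : E} (hspan : span ℝ {u, v} = ⊤) {f : StrongDual ℝ E}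
    (hf : f ≠ 0) (hfv : f v = 0) : BNormal u v ↔ |f u| = ‖u‖ * ‖f‖ := by
  have hle : |f u| ≤ ‖u‖ * ‖f‖ := by
    rw [← Real.norm_eq_abs, mul_comm]; exact f.le_opNorm u
  constructor
  · intro huv
    refine le_antisymm hle ?_
    rcases (norm_nonneg u).eq_or_lt with hu | hu
    · simp [← hu]
    have hbound : ‖f‖ ≤ |f u| / ‖u‖ := f.opNorm_le_bound (by positivity) fun z => by
      rw [Real.norm_eq_abs, div_mul_eq_mul_div, le_div_iff₀ hu]
      exact huv.abs_apply_mul_norm_le f.toLinearMap hfv (hspan ▸ mem_top)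
    rwa [le_div_iff₀ hu, mul_comm] at hbound
  · intro heq t
    refine le_of_mul_le_mul_right ?_ (norm_pos_iff.2 hf)
    calc ‖u‖ * ‖f‖ = |f (u + t • v)| := by simp [hfv, heq]
      _ ≤ ‖f‖ * ‖u + t • v‖ := by rw [← Real.norm_eq_abs]; exact f.le_opNorm _
      _ = ‖u + t • v‖ * ‖f‖ := mul_comm _ _

theorem bNormal_strongDual_iff {x : E} (hx : x ≠ 0) {φ ψ : StrongDual ℝ E}
    (hspan : span ℝ {φ, ψ} = ⊤) (hψx : ψ x = 0) : BNormal φ ψ ↔ |φ x| = ‖x‖ * ‖φ‖ := by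
  have hnorm : ‖NormedSpace.inclusionInDoubleDualLi ℝ x‖ = ‖x‖ :=
    (NormedSpace.inclusionInDoubleDualLi ℝ).norm_map x
  rw [bNormal_iff_abs_apply_eq hspan (f := NormedSpace.inclusionInDoubleDualLi ℝ x)
    (by rw [← norm_ne_zero_iff, hnorm]; exact norm_ne_zero_iff.2 hx) hψx, hnorm, mul_comm]
  rfl

theorem sSup_apply_sphere_eq_norm (f : StrongDual ℝ E) :
    sSup {r : ℝ | ∃ y : E, ‖y‖ = 1 ∧ r = f y} = ‖f‖ := by
  rw [← f.sSup_sphere_eq_norm]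
  refine csSup_eq_csSup_of_forall_exists_le ?_ ?_
  · rintro - ⟨y, hy, rfl⟩
    exact ⟨_, ⟨y, by simpa using hy, rfl⟩, Real.le_norm_self _⟩
  · rintro - ⟨y, hy, rfl⟩
    rcases le_total 0 (f y) with h | h
    · exact ⟨f y, ⟨y, by simpa using hy, rfl⟩, (Real.norm_of_nonneg h).le⟩
    · exact ⟨f (-y), ⟨-y, by simpa using hy, rfl⟩, by simp [Real.norm_of_nonpos h]⟩

end Normality

section Antinorm

variable {V : Type*} [NormedAddCommGroup V] [NormedSpace ℝ V] [FiniteDimensional ℝ V]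
  {ω : V →ₗ[ℝ] V →ₗ[ℝ] ℝ}

variable (ω) in
noncomputable def LinearMap.toStrongDual : V →ₗ[ℝ] StrongDual ℝ V :=
  LinearMap.toContinuousLinearMap.toLinearMap ∘ₗ ω

@[simp]
theorem LinearMap.toStrongDual_apply (x y : V) : ω.toStrongDual x y = ω x y := rfl

variable (ω) in
theorem anorm_eq_norm_toStrongDual (x : V) : anorm ω x = ‖ω.toStrongDual x‖ :=
  sSup_apply_sphere_eq_norm (ω.toStrongDual x)

theorem LinearMap.SeparatingLeft.toStrongDual_ne_zero (hsep : ω.SeparatingLeft) {x : V}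
    (hx : x ≠ 0) : ω.toStrongDual x ≠ 0 :=
  fun h => hx (hsep x fun y => by simpa using DFunLike.congr_fun h y)

theorem anorm_pos (hsep : ω.SeparatingLeft) {x : V} (hx : x ≠ 0) : 0 < anorm ω x := by
  rw [anorm_eq_norm_toStrongDual, norm_pos_iff]
  exact hsep.toStrongDual_ne_zero hx

theorem finrank_strongDual : finrank ℝ (StrongDual ℝ V) = finrank ℝ V :=
  LinearMap.toContinuousLinearMap.finrank_eq.symm.trans Subspace.dual_finrank_eq

variable (hdim : finrank ℝ V = 2) (hω : ω.IsAlt) (hsep : ω.SeparatingLeft)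
include hdim hω hsep

theorem bNormal_iff_abs_apply_eq_mul_anorm {x y : V} (hx : x ≠ 0) (hy : y ≠ 0) :
    BNormal x y ↔ |ω x y| = ‖x‖ * anorm ω y := by
  have hyx : ω y x = -ω x y := (hω.neg x y).symm
  by_cases hxy : ω x y = 0
  · refine iff_of_false (fun hB => hx ?_) ?_
    · have hmem :=
        hω.mem_span_singleton_of_apply_eq_zero hdim hsep hy (by rw [hyx, hxy, neg_zero])
      have := NormalWith.le_apply_zero_of_mem_span_singleton (N := fun z : V => ‖z‖) hB hmem
      simpa using this
    · rw [hxy, abs_zero]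
      exact (mul_pos (norm_pos_iff.2 hx) (anorm_pos hsep hy)).ne
  · rw [anorm_eq_norm_toStrongDual, ← abs_neg, ← hyx]
    exact bNormal_iff_abs_apply_eq (hω.span_pair_eq_top hdim hxy)
      (hsep.toStrongDual_ne_zero hy) (hω.self_eq_zero y)

theorem span_toStrongDual_pair_eq_top {x y : V} (h : ω x y ≠ 0) :
    span ℝ {ω.toStrongDual x, ω.toStrongDual y} = ⊤ := by
  refine span_pair_eq_top_of_notMem_span_singleton (finrank_strongDual.trans hdim)
    (hsep.toStrongDual_ne_zero fun hx => h (by simp [hx])) fun hy => h ?_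
  obtain ⟨c, hc⟩ := mem_span_singleton.1 hy
  rw [← hω.neg y x, neg_eq_zero]
  simpa [hω.self_eq_zero] using (DFunLike.congr_fun hc x).symm

theorem normalWith_anorm_iff_abs_apply_eq_mul_anorm {x y : V} (hx : x ≠ 0) (hy : y ≠ 0) :
    NormalWith (anorm ω) y x ↔ |ω x y| = ‖x‖ * anorm ω y := by
  have hyx : ω y x = -ω x y := (hω.neg x y).symm
  by_cases hxy : ω x y = 0
  · refine iff_of_false (fun hN => (anorm_pos hsep hy).not_ge ?_) ?_
    · have hmem := hω.mem_span_singleton_of_apply_eq_zero hdim hsep hx hxy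
      simpa [anorm_eq_norm_toStrongDual] using hN.le_apply_zero_of_mem_span_singleton hmem
    · rw [hxy, abs_zero]
      exact (mul_pos (norm_pos_iff.2 hx) (anorm_pos hsep hy)).ne
  · have hdual : NormalWith (anorm ω) y x ↔ BNormal (ω.toStrongDual y) (ω.toStrongDual x) := by
      simp only [NormalWith, BNormal, anorm_eq_norm_toStrongDual, map_add, map_smul]
    rw [hdual, anorm_eq_norm_toStrongDual, ← abs_neg, ← hyx]
    exact bNormal_strongDual_iff hx
      (span_toStrongDual_pair_eq_top hdim hω hsep (by rwa [hyx, neg_ne_zero]))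
      (hω.self_eq_zero x)

end Antinorm

/-- For nonzero `x, y`: `x ⊣ y` iff `|ω x y| = ‖x‖ * anorm ω y`, and this holds iff `y` is
normal to `x` with respect to the antinorm; i.e. the antinorm reverses normality. -/
theorem stmt6 {V : Type*} [NormedAddCommGroup V] [NormedSpace ℝ V]
    (hdim : Module.finrank ℝ V = 2)
    (ω : V →ₗ[ℝ] V →ₗ[ℝ] ℝ)
    (halt : ∀ x : V, ω x x = 0)
    (hnd : ∀ a : V, (∀ y : V, ω a y = 0) → a = 0) :
    ∀ x y : V, x ≠ 0 → y ≠ 0 →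
      ((BNormal x y ↔ |ω x y| = ‖x‖ * anorm ω y) ∧
       (BNormal x y ↔ NormalWith (anorm ω) y x)) := by
  have : FiniteDimensional ℝ V := .of_finrank_eq_succ hdim
  intro x y hx hy
  have hB := bNormal_iff_abs_apply_eq_mul_anorm hdim halt hnd hx hy
  exact ⟨hB, hB.trans (normalWith_anorm_iff_abs_apply_eq_mul_anorm hdim halt hnd hx hy).symm⟩
end

section
/- If two norms on a two-dimensional real vector space induce the same Birkhoff normality relation, then they are proportional. -/
/-!
For a seminorm `N`, `x ⊣ w - c • x` holds exactly when `t ↦ N x * (1 + t * c)` is a supporting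
line of the convex function `t ↦ N (x + t • w)` at `0`. So two norms with the same normality
relation have the same logarithmic right derivative along every line `t ↦ u + t • w` missing the
origin: their ratio has zero right derivative there and is therefore constant on the line. Any two
nonzero vectors are either proportional or lie on such a line.
-/

open Set

section Convex

variable {g : ℝ → ℝ}

lemma ConvexOn.add_mul_rightDeriv_le (hg : ConvexOn ℝ univ g) (s r : ℝ) :
    g s + r * derivWithin g (Ioi s) s ≤ g (s + r) := by
  have hs : s ∈ interior univ := by simp
  rcases lt_trichotomy r 0 with hr | rfl | hr
  · have hslope : slope g (s + r) s ≤ derivWithin g (Ioi s) s :=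
      (hg.slope_le_leftDeriv_of_mem_interior (mem_univ _) hs (by linarith)).trans
        (hg.leftDeriv_le_rightDeriv_of_mem_interior hs)
    rw [slope_def_field, show s - (s + r) = -r by ring, div_le_iff₀ (by linarith)] at hslope
    linarith
  · simp
  · have hslope : derivWithin g (Ioi s) s ≤ slope g s (s + r) :=
      hg.rightDeriv_le_slope_of_mem_interior hs (mem_univ _) (by linarith)
    rw [slope_def_field, add_sub_cancel_left, le_div_iff₀ hr] at hslope
    linarith

lemma ConvexOn.le_rightDeriv_of_add_mul_le (hg : ConvexOn ℝ univ g) {s c : ℝ}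
    (h : ∀ r, g s + r * c ≤ g (s + r)) :
    c ≤ derivWithin g (Ioi s) s := by
  have hd := hg.hasDerivWithinAt_rightDeriv_of_mem_interior (x := s) (by simp)
  refine ge_of_tendsto ((hasDerivWithinAt_iff_tendsto_slope' self_notMem_Ioi).mp hd) ?_
  refine eventually_nhdsWithin_of_forall fun t (ht : s < t) => ?_
  have := h (t - s)
  rw [add_sub_cancel] at this
  rw [slope_def_field, le_div_iff₀ (sub_pos.2 ht)]
  linarith

end Convex

section Normality

variable {V : Type*} [AddCommGroup V] [Module ℝ V]

def SameNormality (N₁ N₂ : V → ℝ) : Prop :=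
  ∀ x y : V, x ≠ 0 → y ≠ 0 → (NormalWith N₁ x y ↔ NormalWith N₂ x y)

lemma SameNormality.symm {N₁ N₂ : V → ℝ} (h : SameNormality N₁ N₂) : SameNormality N₂ N₁ :=
  fun x y hx hy => (h x y hx hy).symm

namespace Seminorm

section SupportingLine

variable (p : Seminorm ℝ V) {x w : V} {c : ℝ}

lemma mul_le_apply_add_smul_of_normalWith (h : NormalWith p x (w - c • x)) (t : ℝ) :
    p x * (1 + t * c) ≤ p (x + t • w) := by
  rcases le_or_gt (1 + t * c) 0 with ha | ha
  · exact (mul_nonpos_of_nonneg_of_nonpos (apply_nonneg p x) ha).trans (apply_nonneg p _)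
  · have hsplit : x + t • w = (1 + t * c) • (x + (t / (1 + t * c)) • (w - c • x)) := by
      rw [smul_add, smul_smul, mul_div_cancel₀ _ ha.ne']
      module
    rw [hsplit, map_smul_eq_mul, Real.norm_of_nonneg ha.le, mul_comm]
    exact mul_le_mul_of_nonneg_left (h _) ha.le

lemma normalWith_sub_smul_of_mul_le (h : ∀ t, p x * (1 + t * c) ≤ p (x + t • w)) :
    NormalWith p x (w - c • x) := by
  intro t
  have hcomb : x + t • (w - c • x) = (1 - t * c) • x + t • w := by module
  rw [hcomb]
  rcases lt_or_ge 0 (1 - t * c) with ha | ha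
  · have hsplit : (1 - t * c) • x + t • w = (1 - t * c) • (x + (t / (1 - t * c)) • w) := by
      rw [smul_add, smul_smul, mul_div_cancel₀ _ ha.ne']
    rw [hsplit, map_smul_eq_mul, Real.norm_of_nonneg ha.le]
    have := mul_le_mul_of_nonneg_left (h (t / (1 - t * c))) ha.le
    calc p x = (1 - t * c) * (p x * (1 + t / (1 - t * c) * c)) := by field_simp; ring
      _ ≤ _ := this
  · -- No rescaling to `x + _ • w` is possible; instead `t * c * p x ≤ p (t • w)` and the
    -- triangle inequality against `(1 - t * c) • x` suffice.
    have hslope : t * c * p x ≤ |t| * p w := by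
      have h₁ := h t
      have h₂ := map_add_le_add p x (t • w)
      rw [map_smul_eq_mul, Real.norm_eq_abs] at h₂
      linarith
    have htri := map_add_le_add p ((1 - t * c) • x + t • w) (-(1 - t * c) • x)
    rw [show (1 - t * c) • x + t • w + -(1 - t * c) • x = t • w by module, map_smul_eq_mul,
      map_smul_eq_mul, Real.norm_eq_abs, Real.norm_eq_abs, abs_neg, abs_of_nonpos ha] at htri
    linarith

lemma mul_le_apply_add_smul_of_sameNormality {p q : Seminorm ℝ V} (hpq : SameNormality p q)
    (hxw : LinearIndependent ℝ ![x, w]) (h : ∀ t, p x * (1 + t * c) ≤ p (x + t • w)) (t : ℝ) :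
    q x * (1 + t * c) ≤ q (x + t • w) := by
  have hx : x ≠ 0 := hxw.ne_zero 0
  have hy : w - c • x ≠ 0 := by
    rw [sub_eq_neg_add, ← neg_smul]
    exact ((LinearIndependent.pair_add_smul_right_iff (-c)).2 hxw).ne_zero 1
  exact q.mul_le_apply_add_smul_of_normalWith
    ((hpq x _ hx hy).1 (p.normalWith_sub_smul_of_mul_le h)) t

end SupportingLine

section Line

variable {p q : Seminorm ℝ V} {u v w : V}

lemma convexOn_apply_add_smul (p : Seminorm ℝ V) (u w : V) :
    ConvexOn ℝ univ (fun t : ℝ => p (u + t • w)) := by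
  have := p.convexOn.comp_affineMap (AffineMap.lineMap u (u + w))
  simpa [Function.comp_def, AffineMap.lineMap_apply, add_comm] using this

lemma apply_add_smul_pos (hp : ∀ x, p x = 0 → x = 0) (huw : LinearIndependent ℝ ![u, w])
    (s : ℝ) : 0 < p (u + s • w) :=
  (apply_nonneg p _).lt_of_ne' fun h =>
    ((LinearIndependent.pair_add_smul_left_iff s).2 huw).ne_zero 0 (hp _ h)

lemma rightDeriv_mul_le_of_sameNormality (hpq : SameNormality p q) (hp : ∀ x, p x = 0 → x = 0)
    (huw : LinearIndependent ℝ ![u, w]) (s : ℝ) :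
    derivWithin (fun t => p (u + t • w)) (Ioi s) s * q (u + s • w) ≤
      derivWithin (fun t => q (u + t • w)) (Ioi s) s * p (u + s • w) := by
  set x := u + s • w
  have hxw : LinearIndependent ℝ ![x, w] := (LinearIndependent.pair_add_smul_left_iff s).2 huw
  have hpx : 0 < p x := apply_add_smul_pos hp huw s
  have hline : ∀ t, u + (s + t) • w = x + t • w := fun t => by module
  set a := derivWithin (fun t => p (u + t • w)) (Ioi s) s
  have hsub : ∀ t, p x * (1 + t * (a / p x)) ≤ p (x + t • w) := fun t => by
    have := (p.convexOn_apply_add_smul u w).add_mul_rightDeriv_le s t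
    rw [hline] at this
    calc p x * (1 + t * (a / p x)) = p x + t * a := by field_simp
      _ ≤ _ := this
  have htransfer := mul_le_apply_add_smul_of_sameNormality hpq hxw hsub
  have hle : a / p x * q x ≤ derivWithin (fun t => q (u + t • w)) (Ioi s) s :=
    (q.convexOn_apply_add_smul u w).le_rightDeriv_of_add_mul_le fun t => by
      rw [hline]
      calc q x + t * (a / p x * q x) = q x * (1 + t * (a / p x)) := by ring
        _ ≤ _ := htransfer t
  rwa [div_mul_eq_mul_div, div_le_iff₀ hpx] at hle

lemma apply_mul_apply_eq_of_sameNormality (hpq : SameNormality p q)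
    (hp : ∀ x, p x = 0 → x = 0) (hq : ∀ x, q x = 0 → x = 0)
    (huv : LinearIndependent ℝ ![u, v]) : q v * p u = q u * p v := by
  set w := v - u
  have huw : LinearIndependent ℝ ![u, w] := by
    rw [show w = (-1 : ℝ) • u + v by module]
    exact (LinearIndependent.pair_add_smul_right_iff _).2 huv
  have hpc := p.convexOn_apply_add_smul u w
  have hqc := q.convexOn_apply_add_smul u w
  have hderiv : ∀ s : ℝ, HasDerivWithinAt (fun t => q (u + t • w) / p (u + t • w)) 0 (Ici s) s := by
    intro s
    have hp' := hpc.hasDerivWithinAt_rightDeriv_of_mem_interior (x := s) (by simp)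
    have hq' := hqc.hasDerivWithinAt_rightDeriv_of_mem_interior (x := s) (by simp)
    refine (hq'.Ici_of_Ioi.div hp'.Ici_of_Ioi (apply_add_smul_pos hp huw s).ne').congr_deriv ?_
    rw [div_eq_zero_iff, sub_eq_zero]
    left
    linarith [rightDeriv_mul_le_of_sameNormality hpq hp huw s,
      rightDeriv_mul_le_of_sameNormality hpq.symm hq huw s]
  have hcont : ContinuousOn (fun t => q (u + t • w) / p (u + t • w)) (Icc (0 : ℝ) 1) :=
    ((hqc.continuousOn isOpen_univ).div (hpc.continuousOn isOpen_univ)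
      fun s _ => (apply_add_smul_pos hp huw s).ne').mono (subset_univ _)
  have h := constant_of_has_deriv_right_zero hcont (fun s _ => hderiv s) 1 ⟨zero_le_one, le_rfl⟩
  rwa [div_eq_div_iff (apply_add_smul_pos hp huw 1).ne' (apply_add_smul_pos hp huw 0).ne',
    show u + (1 : ℝ) • w = v by module, show u + (0 : ℝ) • w = u by module] at h

end Line

end Seminorm

end Normality

theorem stmt7_general {V : Type*} [AddCommGroup V] [Module ℝ V]
    (N₁ N₂ : V → ℝ)
    (h₁def : ∀ x : V, N₁ x = 0 → x = 0)
    (h₁homog : ∀ (c : ℝ) (x : V), N₁ (c • x) = |c| * N₁ x)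
    (h₁tri : ∀ x y : V, N₁ (x + y) ≤ N₁ x + N₁ y)
    (h₂def : ∀ x : V, N₂ x = 0 → x = 0)
    (h₂homog : ∀ (c : ℝ) (x : V), N₂ (c • x) = |c| * N₂ x)
    (h₂tri : ∀ x y : V, N₂ (x + y) ≤ N₂ x + N₂ y)
    (hsame : ∀ x y : V, x ≠ 0 → y ≠ 0 → (NormalWith N₁ x y ↔ NormalWith N₂ x y)) :
    ∃ c : ℝ, 0 < c ∧ ∀ x : V, N₂ x = c * N₁ x := by
  let p₁ : Seminorm ℝ V := .of N₁ h₁tri (by simpa only [Real.norm_eq_abs] using h₁homog)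
  let p₂ : Seminorm ℝ V := .of N₂ h₂tri (by simpa only [Real.norm_eq_abs] using h₂homog)
  rcases subsingleton_or_nontrivial V with hV | _
  · refine ⟨1, one_pos, fun x => ?_⟩
    rw [Subsingleton.elim x 0, one_mul]
    exact (map_zero p₂).trans (map_zero p₁).symm
  obtain ⟨e, he⟩ := exists_ne (0 : V)
  have hpos₁ : 0 < N₁ e := (apply_nonneg p₁ e).lt_of_ne' (mt (h₁def e) he)
  have hpos₂ : 0 < N₂ e := (apply_nonneg p₂ e).lt_of_ne' (mt (h₂def e) he)
  refine ⟨N₂ e / N₁ e, div_pos hpos₂ hpos₁, fun z => ?_⟩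
  by_cases hz : ∃ l : ℝ, l • e = z
  · obtain ⟨l, rfl⟩ := hz
    rw [h₁homog, h₂homog]
    field_simp
  · push Not at hz
    have h := Seminorm.apply_mul_apply_eq_of_sameNormality (p := p₁) (q := p₂) hsame h₁def h₂def
      ((LinearIndependent.pair_iff' he).2 hz)
    field_simp
    exact h

/-- If two norms on a two-dimensional real vector space induce the same Birkhoff
normality relation, then they are proportional. -/
theorem stmt7 {V : Type*} [AddCommGroup V] [Module ℝ V]
    (hdim : Module.finrank ℝ V = 2)
    (N₁ N₂ : V → ℝ)
    (h₁nonneg : ∀ x : V, 0 ≤ N₁ x) (h₁def : ∀ x : V, N₁ x = 0 → x = 0)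
    (h₁homog : ∀ (c : ℝ) (x : V), N₁ (c • x) = |c| * N₁ x)
    (h₁tri : ∀ x y : V, N₁ (x + y) ≤ N₁ x + N₁ y)
    (h₂nonneg : ∀ x : V, 0 ≤ N₂ x) (h₂def : ∀ x : V, N₂ x = 0 → x = 0)
    (h₂homog : ∀ (c : ℝ) (x : V), N₂ (c • x) = |c| * N₂ x)
    (h₂tri : ∀ x y : V, N₂ (x + y) ≤ N₂ x + N₂ y)
    (hsame : ∀ x y : V, x ≠ 0 → y ≠ 0 → (NormalWith N₁ x y ↔ NormalWith N₂ x y)) :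
    ∃ c : ℝ, 0 < c ∧ ∀ x : V, N₂ x = c * N₁ x :=
  stmt7_general N₁ N₂ h₁def h₁homog h₁tri h₂def h₂homog h₂tri hsame
end

section
/- The Minkowski content of a segment equals its length in the antinorm: for a, b ∈ V, lim_{ε→0⁺} area(ab + εB)/(2ε) = ‖a − b‖ₐ, where ab is the segment from a to b, B is the unit ball of the norm, and area is the measure induced by the symplectic form. -/
open MeasureTheory Pointwise

section aux
variable {V : Type*} [NormedAddCommGroup V] [NormedSpace ℝ V]
  (ω : V →ₗ[ℝ] V →ₗ[ℝ] ℝ)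

lemma anorm_set_eq (x : V) :
    {r : ℝ | ∃ y : V, ‖y‖ = 1 ∧ r = ω x y} = (fun y => ω x y) '' Metric.sphere (0:V) 1 := by
  ext r
  simp only [Set.mem_setOf_eq, Set.mem_image, mem_sphere_zero_iff_norm]
  constructor
  · rintro ⟨y, hy, rfl⟩; exact ⟨y, hy, rfl⟩
  · rintro ⟨y, hy, rfl⟩; exact ⟨y, hy, rfl⟩

variable [Nontrivial V] [FiniteDimensional ℝ V]

lemma anorm_exists_max (x : V) : ∃ y : V, ‖y‖ = 1 ∧ ω x y = anorm ω x := by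
  have hc : IsCompact ((fun y => ω x y) '' Metric.sphere (0:V) 1) :=
    (isCompact_sphere _ _).image (ω x).continuous_of_finiteDimensional
  have hne : ((fun y => ω x y) '' Metric.sphere (0:V) 1).Nonempty :=
    (NormedSpace.sphere_nonempty (E := V) (x := 0) (r := 1) |>.2 zero_le_one).image _
  have := hc.sSup_mem hne
  rw [anorm, anorm_set_eq]
  obtain ⟨y, hy, hyx⟩ := this
  exact ⟨y, mem_sphere_zero_iff_norm.1 hy, hyx⟩

omit [Nontrivial V] in
lemma anorm_ub {x y : V} (hy : ‖y‖ = 1) : ω x y ≤ anorm ω x := by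
  have hc : IsCompact ((fun y => ω x y) '' Metric.sphere (0:V) 1) :=
    (isCompact_sphere _ _).image (ω x).continuous_of_finiteDimensional
  rw [anorm, anorm_set_eq]
  exact le_csSup hc.bddAbove ⟨y, mem_sphere_zero_iff_norm.2 hy, rfl⟩

lemma anorm_nonneg (x : V) : 0 ≤ anorm ω x := by
  obtain ⟨y, hy'⟩ := NormedSpace.sphere_nonempty (E := V) (x := 0) (r := 1) |>.2 zero_le_one
  have hy : ‖y‖ = 1 := mem_sphere_zero_iff_norm.1 hy'
  have h1 : ω x y ≤ anorm ω x := anorm_ub ω hy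
  have h2 : ω x (-y) ≤ anorm ω x := anorm_ub ω (by rw [norm_neg]; exact hy)
  rw [map_neg] at h2
  linarith

lemma anorm_le (x z : V) : ω x z ≤ anorm ω x * ‖z‖ := by
  rcases eq_or_ne z 0 with rfl | hz
  · simp
  · have hz' : ‖z‖ ≠ 0 := norm_ne_zero_iff.2 hz
    have h1 : ‖(‖z‖⁻¹ • z)‖ = 1 := by
      rw [norm_smul, norm_inv, norm_norm, inv_mul_cancel₀ hz']
    have := anorm_ub ω (x := x) h1
    rw [_root_.map_smul] at this
    have hpos : (0:ℝ) < ‖z‖ := norm_pos_iff.2 hz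
    calc ω x z = ‖z‖ * (‖z‖⁻¹ * ω x z) := by field_simp
    _ ≤ ‖z‖ * anorm ω x := by
        apply mul_le_mul_of_nonneg_left _ hpos.le
        simpa using this
    _ = anorm ω x * ‖z‖ := mul_comm _ _

lemma abs_anorm_le (x z : V) : |ω x z| ≤ anorm ω x * ‖z‖ := by
  rw [abs_le]
  constructor
  · have := anorm_le ω x (-z); rw [map_neg, norm_neg] at this; linarith
  · exact anorm_le ω x z

end aux

lemma measure_image_add {V : Type*} [NormedAddCommGroup V]
    [MeasurableSpace V] (μ : Measure V) [μ.IsAddLeftInvariant]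
    (c : V) (s : Set V) : μ ((fun x => c + x) '' s) = μ s := by
  have := measure_vadd μ c s
  rw [← Set.image_vadd] at this
  simpa [vadd_eq_add] using this

open MeasureTheory Pointwise

set_option maxHeartbeats 1000000 in
/-- The Minkowski content of a segment equals its length in the antinorm:
`lim_{ε→0⁺} area(ab + εB)/(2ε) = ‖a − b‖ₐ`, where `μ` is the area measure induced by the
symplectic form (a Haar measure assigning to each parallelogram spanned by `x, y` the
area `|ω x y|`). -/
theorem stmt8 {V : Type*} [NormedAddCommGroup V] [NormedSpace ℝ V]
    [MeasurableSpace V] [BorelSpace V]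
    (hdim : Module.finrank ℝ V = 2)
    (ω : V →ₗ[ℝ] V →ₗ[ℝ] ℝ)
    (halt : ∀ x : V, ω x x = 0)
    (hnd : ∀ a : V, (∀ y : V, ω a y = 0) → a = 0)
    (μ : Measure V) [μ.IsAddHaarMeasure]
    (hμω : ∀ x y : V,
      μ (Set.image2 (fun s t : ℝ => s • x + t • y) (Set.Icc 0 1) (Set.Icc 0 1)) =
        ENNReal.ofReal |ω x y|)
    (a b : V) :
    Filter.Tendsto
      (fun ε : ℝ =>
        (μ (segment ℝ a b + ε • Metric.closedBall (0 : V) 1)).toReal / (2 * ε))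
      (nhdsWithin 0 (Set.Ioi 0)) (nhds (anorm ω (a - b))) := by
  have hfd : FiniteDimensional ℝ V := FiniteDimensional.of_finrank_eq_succ hdim
  have hnt : Nontrivial V := by
    have h : 0 < Module.finrank ℝ V := by omega
    exact Module.nontrivial_of_finrank_pos h
  have hskew : ∀ x y : V, ω y x = - ω x y := by
    intro x y
    have h := halt (x + y)
    simp only [map_add, LinearMap.add_apply, halt] at h
    linarith
  rcases eq_or_ne (a - b) 0 with hv0 | hv0
  · -- degenerate case a = b
    have hab : a = b := sub_eq_zero.mp hv0
    have hA : anorm ω (a - b) = 0 := by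
      rw [hv0]
      have hset : {r : ℝ | ∃ y : V, ‖y‖ = 1 ∧ r = ω 0 y} = {0} := by
        ext r
        simp only [Set.mem_setOf_eq, Set.mem_singleton_iff, map_zero, LinearMap.zero_apply]
        constructor
        · rintro ⟨y, hy, rfl⟩; rfl
        · rintro rfl
          obtain ⟨y, hy'⟩ := NormedSpace.sphere_nonempty (E := V) (x := 0) (r := 1) |>.2
            zero_le_one
          exact ⟨y, mem_sphere_zero_iff_norm.1 hy', rfl⟩
      rw [anorm, hset, csSup_singleton]
    rw [hA, hab]
    set c : ℝ := (μ (Metric.ball (0:V) 1)).toReal with hc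
    have heq : ∀ ε : ℝ, ε ∈ Set.Ioi (0:ℝ) →
        (μ (segment ℝ b b + ε • Metric.closedBall (0 : V) 1)).toReal / (2 * ε)
          = ε * c / 2 := by
      intro ε hε
      rw [Set.mem_Ioi] at hε
      have h1 : ε • Metric.closedBall (0:V) 1 = Metric.closedBall (0:V) ε := by
        rw [smul_closedBall _ _ zero_le_one, smul_zero, Real.norm_eq_abs, abs_of_pos hε,
          mul_one]
      have h2 : μ (segment ℝ b b + ε • Metric.closedBall (0:V) 1)
          = μ (Metric.closedBall (0:V) ε) := by
        rw [segment_same, h1, Set.singleton_add, measure_image_add]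
      rw [h2, Measure.addHaar_closedBall μ 0 hε.le, hdim]
      rw [ENNReal.toReal_mul, ENNReal.toReal_ofReal (by positivity)]
      field_simp
      ring
    have hbase : Filter.Tendsto (fun ε : ℝ => ε * c / 2) (nhdsWithin 0 (Set.Ioi 0))
        (nhds 0) := by
      have hcont : Continuous fun ε : ℝ => ε * c / 2 :=
        (continuous_id.mul continuous_const).div_const 2
      have h2 : Filter.Tendsto (fun ε : ℝ => ε * c / 2) (nhdsWithin 0 (Set.Ioi 0))
          (nhds (0 * c / 2)) := (hcont.tendsto 0).mono_left nhdsWithin_le_nhds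
      simpa using h2
    refine Filter.Tendsto.congr' ?_ hbase
    filter_upwards [self_mem_nhdsWithin] with ε hε
    exact (heq ε hε).symm
  · -- main case
    set v := a - b with hv
    set A := anorm ω v with hA
    have hA0 : 0 ≤ A := anorm_nonneg ω v
    obtain ⟨y₀, hy₀, hy₀A⟩ := anorm_exists_max ω v
    have hApos : 0 < A := by
      rcases hA0.lt_or_eq with h | h
      · exact h
      · exfalso
        apply hv0
        apply hnd
        intro y
        have h1 : ω v y ≤ A * ‖y‖ := anorm_le ω v y
        have h2 : ω v (-y) ≤ A * ‖-y‖ := anorm_le ω v (-y)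
        rw [map_neg, norm_neg] at h2
        rw [← h] at h1 h2
        simp only [zero_mul] at h1 h2
        linarith
    set Ay := anorm ω y₀ with hAy
    have hAy0 : 0 ≤ Ay := anorm_nonneg ω y₀
    set C := Ay / A with hC
    have hC0 : 0 ≤ C := div_nonneg hAy0 hApos.le
    have hωvy : ω y₀ v = -A := by rw [hskew v y₀, hy₀A]
    -- decomposition
    have hdecomp : ∀ u : V, ‖u‖ ≤ 1 →
        ∃ cu du : ℝ, u = cu • v + du • y₀ ∧ |cu| ≤ C ∧ |du| ≤ 1 := by
      have hindep : LinearIndependent ℝ ![v, y₀] := by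
        rw [LinearIndependent.pair_iff]
        intro s t hst
        have h1 : ω v (s • v + t • y₀) = 0 := by rw [hst, map_zero]
        rw [map_add, _root_.map_smul, _root_.map_smul, smul_eq_mul, smul_eq_mul,
          halt v, hy₀A, mul_zero, zero_add] at h1
        have ht : t = 0 := by
          rcases mul_eq_zero.1 h1 with h | h
          · exact h
          · exact absurd h hApos.ne'
        subst ht
        rw [zero_smul, add_zero] at hst
        rcases smul_eq_zero.1 hst with h | h
        · exact ⟨h, rfl⟩
        · exact absurd h hv0
      have hsp := hindep.span_eq_top_of_card_eq_finrank (by simp [hdim])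
      have hrange : Set.range ![v, y₀] = {v, y₀} := by
        simp [Matrix.range_cons, Matrix.range_empty, Set.pair_comm]
      intro u hu
      have hu' : u ∈ Submodule.span ℝ ({v, y₀} : Set V) := by
        rw [← hrange, hsp]; trivial
      obtain ⟨cu, du, hcd⟩ := Submodule.mem_span_pair.1 hu'
      refine ⟨cu, du, hcd.symm, ?_, ?_⟩
      · have h1 : ω y₀ u = -(cu * A) := by
          rw [← hcd, map_add, _root_.map_smul, _root_.map_smul, smul_eq_mul, smul_eq_mul,
            halt y₀, hωvy, mul_zero, add_zero, mul_neg]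
        have h2 : |ω y₀ u| ≤ Ay * ‖u‖ := abs_anorm_le ω y₀ u
        rw [h1, abs_neg, abs_mul, abs_of_pos hApos] at h2
        have h3 : |cu| * A ≤ Ay := by nlinarith [abs_nonneg cu, norm_nonneg u]
        rw [hC]
        exact (le_div_iff₀ hApos).2 h3
      · have h1 : ω v u = du * A := by
          rw [← hcd, map_add, _root_.map_smul, _root_.map_smul, smul_eq_mul, smul_eq_mul,
            halt v, hy₀A, mul_zero, zero_add]
        have h2 : |ω v u| ≤ A * ‖u‖ := abs_anorm_le ω v u
        rw [h1, abs_mul, abs_of_pos hApos] at h2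
        nlinarith [abs_nonneg du, norm_nonneg u]
    have hseg : ∀ s : ℝ, s ∈ Set.Icc (0:ℝ) 1 → b + s • v ∈ segment ℝ a b := by
      intro s hs
      rw [segment_symm, segment_eq_image']
      exact ⟨s, hs, rfl⟩
    -- key bounds
    have key : ∀ ε : ℝ, 0 < ε →
        ENNReal.ofReal (2*ε*A) ≤ μ (segment ℝ a b + ε • Metric.closedBall (0:V) 1) ∧
        μ (segment ℝ a b + ε • Metric.closedBall (0:V) 1)
          ≤ ENNReal.ofReal ((1+2*ε*C)*(2*ε)*A) := by
      intro ε hε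
      constructor
      · -- lower bound
        have hsub : (fun z => (b + (-ε) • y₀) + z) ''
            (Set.image2 (fun s t : ℝ => s • v + t • ((2*ε) • y₀))
              (Set.Icc 0 1) (Set.Icc 0 1))
            ⊆ segment ℝ a b + ε • Metric.closedBall (0:V) 1 := by
          rintro x ⟨z, hz, rfl⟩
          obtain ⟨s, hs, t, ht, rfl⟩ := Set.mem_image2.1 hz
          show (b + (-ε) • y₀) + (s • v + t • ((2*ε) • y₀))
            ∈ segment ℝ a b + ε • Metric.closedBall (0:V) 1
          have hx : (b + (-ε) • y₀) + (s • v + t • ((2*ε) • y₀))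
              = (b + s • v) + ε • ((2*t-1) • y₀) := by module
          rw [hx]
          apply Set.add_mem_add (hseg s hs)
          apply Set.smul_mem_smul_set
          rw [mem_closedBall_zero_iff, norm_smul, hy₀, mul_one, Real.norm_eq_abs, abs_le]
          obtain ⟨ht0, ht1⟩ := ht
          constructor <;> linarith
        have hω : ω v ((2*ε) • y₀) = 2*ε*A := by
          rw [_root_.map_smul, smul_eq_mul, hy₀A]
        calc ENNReal.ofReal (2*ε*A)
            = μ (Set.image2 (fun s t : ℝ => s • v + t • ((2*ε) • y₀))
              (Set.Icc 0 1) (Set.Icc 0 1)) := by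
              rw [hμω, hω, abs_of_nonneg (by positivity)]
          _ = μ ((fun z => (b + (-ε) • y₀) + z) ''
              (Set.image2 (fun s t : ℝ => s • v + t • ((2*ε) • y₀))
                (Set.Icc 0 1) (Set.Icc 0 1))) := (measure_image_add μ _ _).symm
          _ ≤ _ := measure_mono hsub
      · -- upper bound
        have hD : (0:ℝ) < 1 + 2*ε*C := by positivity
        have hsub2 : segment ℝ a b + ε • Metric.closedBall (0:V) 1
            ⊆ (fun z => (b + (-(ε*C)) • v + (-ε) • y₀) + z) ''
              (Set.image2 (fun s t : ℝ => s • ((1+2*ε*C) • v) + t • ((2*ε) • y₀))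
                (Set.Icc 0 1) (Set.Icc 0 1)) := by
          rintro x hx
          rw [Set.mem_add] at hx
          obtain ⟨p, hp, q, hq, rfl⟩ := hx
          rw [segment_symm, segment_eq_image'] at hp
          obtain ⟨s, hs, rfl⟩ := hp
          obtain ⟨u, hu, rfl⟩ := hq
          rw [mem_closedBall_zero_iff] at hu
          obtain ⟨cu, du, hudef, hcu, hdu⟩ := hdecomp u hu
          obtain ⟨hcu1, hcu2⟩ := abs_le.1 hcu
          obtain ⟨hdu1, hdu2⟩ := abs_le.1 hdu
          obtain ⟨hs0, hs1⟩ := hs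
          refine ⟨((s + ε*cu + ε*C)/(1+2*ε*C)) • ((1+2*ε*C) • v)
            + ((du+1)/2) • ((2*ε) • y₀), Set.mem_image2.2
              ⟨(s + ε*cu + ε*C)/(1+2*ε*C), ?_, (du+1)/2, ?_, rfl⟩, ?_⟩
          · constructor
            · apply div_nonneg _ hD.le
              nlinarith
            · rw [div_le_one hD]
              nlinarith
          · constructor <;> [linarith; linarith]
          · show (b + (-(ε*C)) • v + (-ε) • y₀) +
              (((s + ε*cu + ε*C)/(1+2*ε*C)) • ((1+2*ε*C) • v)
                + ((du+1)/2) • ((2*ε) • y₀)) = b + s • (a - b) + ε • u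
            rw [smul_smul, smul_smul, div_mul_cancel₀ _ hD.ne', hudef]
            have hab : a - b = v := hv.symm
            rw [hab]
            module
        have hω2 : ω ((1+2*ε*C) • v) ((2*ε) • y₀) = (1+2*ε*C)*(2*ε)*A := by
          rw [LinearMap.map_smul₂, _root_.map_smul]
          simp only [smul_eq_mul]
          rw [hy₀A]; try ring
        calc μ (segment ℝ a b + ε • Metric.closedBall (0:V) 1)
            ≤ μ ((fun z => (b + (-(ε*C)) • v + (-ε) • y₀) + z) ''
              (Set.image2 (fun s t : ℝ => s • ((1+2*ε*C) • v) + t • ((2*ε) • y₀))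
                (Set.Icc 0 1) (Set.Icc 0 1))) := measure_mono hsub2
          _ = μ (Set.image2 (fun s t : ℝ => s • ((1+2*ε*C) • v) + t • ((2*ε) • y₀))
                (Set.Icc 0 1) (Set.Icc 0 1)) := measure_image_add μ _ _
          _ = ENNReal.ofReal ((1+2*ε*C)*(2*ε)*A) := by
              rw [hμω, hω2, abs_of_nonneg (by positivity)]
    -- squeeze
    apply tendsto_of_tendsto_of_tendsto_of_le_of_le' (g := fun _ : ℝ => A)
      (h := fun ε : ℝ => (1+2*ε*C)*A)
    · exact tendsto_const_nhds
    · have hcont : Continuous fun ε : ℝ => (1+2*ε*C)*A :=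
        (continuous_const.add ((continuous_const.mul continuous_id).mul
          continuous_const)).mul continuous_const
      have h2 : Filter.Tendsto (fun ε : ℝ => (1+2*ε*C)*A) (nhdsWithin 0 (Set.Ioi 0))
          (nhds ((1+2*0*C)*A)) := (hcont.tendsto 0).mono_left nhdsWithin_le_nhds
      simpa using h2
    · filter_upwards [self_mem_nhdsWithin] with ε hε
      rw [Set.mem_Ioi] at hε
      obtain ⟨h1, h2⟩ := key ε hε
      have hfin : μ (segment ℝ a b + ε • Metric.closedBall (0:V) 1) ≠ ⊤ :=
        (h2.trans_lt ENNReal.ofReal_lt_top).ne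
      have h1' : 2*ε*A ≤ (μ (segment ℝ a b + ε • Metric.closedBall (0:V) 1)).toReal := by
        have := ENNReal.toReal_mono hfin h1
        rwa [ENNReal.toReal_ofReal (by positivity)] at this
      rw [le_div_iff₀ (by positivity : (0:ℝ) < 2*ε)]
      linarith
    · filter_upwards [self_mem_nhdsWithin] with ε hε
      rw [Set.mem_Ioi] at hε
      obtain ⟨h1, h2⟩ := key ε hε
      have h2' : (μ (segment ℝ a b + ε • Metric.closedBall (0:V) 1)).toReal
          ≤ (1+2*ε*C)*(2*ε)*A := ENNReal.toReal_le_of_le_ofReal (by positivity) h2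
      rw [div_le_iff₀ (by positivity : (0:ℝ) < 2*ε)]
      calc (μ (segment ℝ a b + ε • Metric.closedBall (0:V) 1)).toReal
          ≤ (1+2*ε*C)*(2*ε)*A := h2'
        _ = (1+2*ε*C)*A*(2*ε) := by ring
end

section
/- For nonzero vectors x, y in a Minkowski plane, if x ⊣ λx + y and μy + x ⊣ y, then 0 ≤ λμ ≤ 2. -/
section

variable {V : Type*} [NormedAddCommGroup V] [NormedSpace ℝ V]

theorem BNormal.norm_add_smul_le {x y : V} {m : ℝ} (h : BNormal (m • y + x) y) :
    ‖x + m • y‖ ≤ ‖x‖ := by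
  simpa [add_comm] using h (-m)

theorem add_div_smul_smul_add_eq_inv_smul (x y : V) {l m : ℝ} (hc : 1 - l * m ≠ 0) :
    x + (m / (1 - l * m)) • (l • x + y) = (1 - l * m)⁻¹ • (x + m • y) := by
  have hc' : 1 - m * l ≠ 0 := by rwa [mul_comm]
  match_scalars
  · field_simp
    ring
  · field_simp

theorem BNormal.norm_le_inv_abs_mul {x y : V} {l m : ℝ} (h : BNormal x (l • x + y))
    (hc : 1 - l * m ≠ 0) : ‖x‖ ≤ |1 - l * m|⁻¹ * ‖x + m • y‖ := by
  have ht := h (m / (1 - l * m))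
  rwa [add_div_smul_smul_add_eq_inv_smul x y hc, norm_smul, Real.norm_eq_abs, abs_inv] at ht

theorem abs_one_sub_mul_le_one_of_bNormal {x y : V} (hx : x ≠ 0) {l m : ℝ}
    (h₁ : BNormal x (l • x + y)) (h₂ : BNormal (m • y + x) y) : |1 - l * m| ≤ 1 := by
  rcases eq_or_ne (1 - l * m) 0 with hc | hc
  · simp [hc]
  have hc' : 0 < |1 - l * m| := abs_pos.mpr hc
  have hx' : 0 < ‖x‖ := norm_pos_iff.mpr hx
  have : ‖x‖ ≤ |1 - l * m|⁻¹ * ‖x‖ :=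
    (h₁.norm_le_inv_abs_mul hc).trans (by gcongr; exact h₂.norm_add_smul_le)
  rw [← div_eq_inv_mul, le_div_iff₀ hc'] at this
  exact (mul_le_iff_le_one_right hx').mp this

end

theorem stmt9_general {V : Type*} [NormedAddCommGroup V] [NormedSpace ℝ V] :
    ∀ x y : V, x ≠ 0 → y ≠ 0 → ∀ l m : ℝ,
      BNormal x (l • x + y) → BNormal (m • y + x) y →
      0 ≤ l * m ∧ l * m ≤ 2 := by
  intro x y hx _ l m h₁ h₂
  have := abs_le.mp (abs_one_sub_mul_le_one_of_bNormal hx h₁ h₂)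
  constructor <;> linarith

/-- If `x ⊣ l • x + y` and `m • y + x ⊣ y`, then `0 ≤ l * m ≤ 2`. -/
theorem stmt9 {V : Type*} [NormedAddCommGroup V] [NormedSpace ℝ V]
    (hdim : Module.finrank ℝ V = 2) :
    ∀ x y : V, x ≠ 0 → y ≠ 0 → ∀ l m : ℝ,
      BNormal x (l • x + y) → BNormal (m • y + x) y →
      0 ≤ l * m ∧ l * m ≤ 2 :=
  stmt9_general
end

section
/- For any linearly independent nonzero x, y in a normed plane there exists α ∈ ℝ such that x ⊣ αx + y; moreover any such α satisfies |α| ≤ ‖y‖/‖x‖. -/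
section

variable {V : Type*} [NormedAddCommGroup V] [NormedSpace ℝ V]

theorem bNormal_of_opNorm_le_one {x z : V} {g : StrongDual ℝ V} (hg : ‖g‖ ≤ 1)
    (hgx : g x = ‖x‖) (hgz : g z = 0) : BNormal x z := fun t =>
  calc ‖x‖ = g (x + t • z) := by simp [hgx, hgz]
    _ ≤ ‖g (x + t • z)‖ := Real.le_norm_self _
    _ ≤ ‖g‖ * ‖x + t • z‖ := g.le_opNorm _
    _ ≤ ‖x + t • z‖ := mul_le_of_le_one_left (norm_nonneg _) hg

theorem exists_bNormal_smul_add (x y : V) : ∃ α : ℝ, BNormal x (α • x + y) := by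
  rcases eq_or_ne x 0 with rfl | hx
  · exact ⟨0, fun t => by simp⟩
  have hx' : ‖x‖ ≠ 0 := norm_ne_zero_iff.2 hx
  obtain ⟨g, hg, hgx⟩ := exists_dual_vector ℝ x hx'
  refine ⟨-g y / ‖x‖, bNormal_of_opNorm_le_one hg.le hgx ?_⟩
  simp only [map_add, map_smul, hgx, smul_eq_mul, RCLike.ofReal_real_eq_id, id]
  field_simp
  ring

theorem BNormal.abs_mul_norm_le {x y : V} {α : ℝ} (h : BNormal x (α • x + y)) :
    |α| * ‖x‖ ≤ ‖y‖ := by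
  rcases eq_or_ne α 0 with rfl | hα
  · simp
  have hsmul : x + (-α⁻¹) • (α • x + y) = (-α⁻¹) • y := by
    rw [smul_add, smul_smul, neg_mul, inv_mul_cancel₀ hα, neg_one_smul, add_neg_cancel_left]
  have hle := h (-α⁻¹)
  rw [hsmul, norm_smul, norm_neg, norm_inv, Real.norm_eq_abs] at hle
  calc |α| * ‖x‖ ≤ |α| * (|α|⁻¹ * ‖y‖) := by gcongr
    _ = ‖y‖ := by field_simp

end

theorem stmt10_general {V : Type*} [NormedAddCommGroup V] [NormedSpace ℝ V]
    (x y : V) (hx : x ≠ 0) :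
    (∃ α : ℝ, BNormal x (α • x + y)) ∧
    (∀ α : ℝ, BNormal x (α • x + y) → |α| ≤ ‖y‖ / ‖x‖) :=
  ⟨exists_bNormal_smul_add x y,
    fun _ hα => (le_div_iff₀ (norm_pos_iff.2 hx)).2 hα.abs_mul_norm_le⟩

/-- (James) For linearly independent `x, y` there is `α` with `x ⊣ α • x + y`, and any
such `α` satisfies `|α| ≤ ‖y‖ / ‖x‖`. -/
theorem stmt10 {V : Type*} [NormedAddCommGroup V] [NormedSpace ℝ V]
    (hdim : Module.finrank ℝ V = 2)
    (x y : V) (hx : x ≠ 0) (hy : y ≠ 0)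
    (hind : LinearIndependent ℝ ![x, y]) :
    (∃ α : ℝ, BNormal x (α • x + y)) ∧
    (∀ α : ℝ, BNormal x (α • x + y) → |α| ≤ ‖y‖ / ‖x‖) :=
  stmt10_general x y hx
end

section
/- A norm on the plane is Radon if and only if for every triangle a₁a₂a₃, the quantity (1/2)·βᵢ·ηᵢ is independent of i, where βᵢ is the norm-length of the side opposite aᵢ and ηᵢ is the norm-distance from aᵢ to the line through the opposite side. -/
/-- The norm-distance from a point `p` to the line through `q` and `r`. -/
noncomputable def distToLine {V : Type*} [NormedAddCommGroup V] [NormedSpace ℝ V]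
    (p q r : V) : ℝ :=
  sInf {d : ℝ | ∃ t : ℝ, d = ‖p - (q + t • (r - q))‖}


/-!
Fix a determinant form `ω` on the plane and let `‖y‖° = sup_{‖x‖ ≤ 1} |ω(x, y)|` be the
antinorm. The distance from `p` to the line through `q` in direction `w` is
`|ω(p - q, w)| / ‖w‖°`, so the half-area attached to a side `w` of a triangle is
`|ω| · ‖w‖ / (2 ‖w‖°)`, where `|ω|` does not depend on the side. Hence the half-areas agree for
all triangles iff `‖·‖°` is a multiple of `‖·‖`.

For the same reason `x ⊣ y` iff `‖x‖ ‖y‖° = |ω(x, y)|` iff `y` is Birkhoff orthogonal to `x` for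
the antinorm, so the norm is Radon iff `‖·‖` and `‖·‖°` have the same Birkhoff orthogonality.
Two norms with the same Birkhoff orthogonality are proportional: on a line, orthogonality
determines the logarithmic right derivative of the norm, so the ratio of the two norms has zero
right derivative along every line and is constant.
-/

open Set Filter Topology

lemma ConvexOn.add_mul_rightDeriv_le_s13 {S : Set ℝ} {f : ℝ → ℝ} (hf : ConvexOn ℝ S f) {x y : ℝ}
    (hx : x ∈ interior S) (hy : y ∈ S) :
    f x + (y - x) * derivWithin f (Ioi x) x ≤ f y := by
  rcases lt_trichotomy x y with hxy | rfl | hxy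
  · have h := hf.rightDeriv_le_slope_of_mem_interior hx hy hxy
    rw [slope_def_field, le_div_iff₀ (sub_pos.2 hxy)] at h
    linarith
  · simp
  · have h := (hf.slope_le_leftDeriv_of_mem_interior hy hx hxy).trans
      (hf.leftDeriv_le_rightDeriv_of_mem_interior hx)
    rw [slope_def_field, div_le_iff₀ (sub_pos.2 hxy)] at h
    linarith

lemma ContinuousLinearMap.exists_norm_eq_one_norm_apply_eq_opNorm {E F : Type*}
    [NormedAddCommGroup E] [NormedSpace ℝ E] [FiniteDimensional ℝ E] [Nontrivial E]
    [NormedAddCommGroup F] [NormedSpace ℝ F] (f : E →L[ℝ] F) :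
    ∃ x, ‖x‖ = 1 ∧ ‖f x‖ = ‖f‖ := by
  have h := ((isCompact_sphere (0 : E) 1).image f.continuous.norm).sSup_mem
    ((NormedSpace.sphere_nonempty.2 zero_le_one).image _)
  rw [f.sSup_sphere_eq_norm] at h
  obtain ⟨x, hx, hfx⟩ := h
  exact ⟨x, mem_sphere_zero_iff_norm.1 hx, hfx⟩

namespace Seminorm

variable {V : Type*} [AddCommGroup V] [Module ℝ V] (p q : Seminorm ℝ V)

def BirkhoffOrthogonal (x y : V) : Prop :=
  ∀ t : ℝ, p x ≤ p (x + t • y)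

lemma birkhoffOrthogonal_iff_isLeast {x y : V} :
    p.BirkhoffOrthogonal x y ↔ IsLeast (range fun t : ℝ => p (x + t • y)) (p x) :=
  ⟨fun h => ⟨⟨0, by simp⟩, by rintro _ ⟨t, rfl⟩; exact h t⟩, fun h t => h.2 ⟨t, rfl⟩⟩

lemma convexOn_add_smul (w₀ w₁ : V) : ConvexOn ℝ univ fun s : ℝ => p (w₀ + s • w₁) := by
  have h : (fun s : ℝ => p (w₀ + s • w₁)) = p ∘ AffineMap.lineMap w₀ (w₀ + w₁) := by
    ext s
    simp [AffineMap.lineMap_apply, add_comm]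
  rw [h]
  exact p.convexOn.comp_affineMap _

variable {p q}

/- A local minimum of a convex function is global, and near `s = 0` the line
`z + s • (w₁ + c • z)` is a rescaling of the line `w₀ + s • w₁`, which `p` dominates by its
supporting line at `u`. -/
lemma birkhoffOrthogonal_of_mul_add_rightDeriv_eq_zero {w₀ w₁ : V} {u c : ℝ}
    (h : c * p (w₀ + u • w₁) + derivWithin (fun s => p (w₀ + s • w₁)) (Ioi u) u = 0) :
    p.BirkhoffOrthogonal (w₀ + u • w₁) (w₁ + c • (w₀ + u • w₁)) := by
  set z := w₀ + u • w₁
  set d := derivWithin (fun s => p (w₀ + s • w₁)) (Ioi u) u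
  have hpos : ∀ᶠ s in 𝓝 (0 : ℝ), 0 < 1 + s * c :=
    (continuous_const.add (continuous_id.mul continuous_const)).tendsto' 0 1 (by simp)
      |>.eventually_const_lt one_pos
  have hmin : IsLocalMin (fun s : ℝ => p (z + s • (w₁ + c • z))) 0 := by
    filter_upwards [hpos] with s hs
    have hline : z + s • (w₁ + c • z) = (1 + s * c) • (w₀ + (u + s / (1 + s * c)) • w₁) := by
      simp only [z]
      match_scalars <;> field_simp
      ring
    have hsupp := (p.convexOn_add_smul w₀ w₁).add_mul_rightDeriv_le_s13 (x := u)
      (y := u + s / (1 + s * c)) (by simp) trivial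
    rw [hline, map_smul_eq_mul, Real.norm_eq_abs, abs_of_pos hs, zero_smul, add_zero]
    calc p z = (1 + s * c) * (p z + (u + s / (1 + s * c) - u) * d) := by
          field_simp
          linear_combination (-s) * h
      _ ≤ _ := mul_le_mul_of_nonneg_left hsupp hs.le
  intro s
  simpa using IsMinOn.of_isLocalMin_of_convex_univ hmin (p.convexOn_add_smul z (w₁ + c • z)) s

lemma neg_mul_le_rightDeriv_of_birkhoffOrthogonal {w₀ w₁ : V} {u c : ℝ}
    (h : p.BirkhoffOrthogonal (w₀ + u • w₁) (w₁ + c • (w₀ + u • w₁))) :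
    -(c * p (w₀ + u • w₁)) ≤ derivWithin (fun s => p (w₀ + s • w₁)) (Ioi u) u := by
  set z := w₀ + u • w₁
  have hd := (p.convexOn_add_smul w₀ w₁).hasDerivWithinAt_rightDeriv_of_mem_interior (x := u)
    (by simp)
  refine ge_of_tendsto ((hasDerivWithinAt_iff_tendsto_slope' self_notMem_Ioi).mp hd) ?_
  have hpos : ∀ᶠ t in 𝓝 u, 0 < 1 - (t - u) * c :=
    (continuous_const.sub ((continuous_id.sub continuous_const).mul continuous_const)).tendsto' u 1
      (by simp) |>.eventually_const_lt one_pos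
  filter_upwards [self_mem_nhdsWithin, nhdsWithin_le_nhds hpos] with t (ht : u < t) ht'
  have hline : w₀ + t • w₁
      = (1 - (t - u) * c) • (z + ((t - u) / (1 - (t - u) * c)) • (w₁ + c • z)) := by
    simp only [z]
    match_scalars <;> field_simp <;> ring
  have horth := h ((t - u) / (1 - (t - u) * c))
  rw [slope_def_field, le_div_iff₀ (sub_pos.2 ht), hline, map_smul_eq_mul, Real.norm_eq_abs,
    abs_of_pos ht']
  nlinarith [mul_le_mul_of_nonneg_left horth ht'.le]

lemma rightDeriv_mul_le_of_birkhoffOrthogonal_imp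
    (hpq : ∀ x y, p.BirkhoffOrthogonal x y → q.BirkhoffOrthogonal x y) (w₀ w₁ : V) (u : ℝ)
    (hp : 0 < p (w₀ + u • w₁)) :
    derivWithin (fun s => p (w₀ + s • w₁)) (Ioi u) u * q (w₀ + u • w₁) ≤
      derivWithin (fun s => q (w₀ + s • w₁)) (Ioi u) u * p (w₀ + u • w₁) := by
  set d := derivWithin (fun s => p (w₀ + s • w₁)) (Ioi u) u
  have h := neg_mul_le_rightDeriv_of_birkhoffOrthogonal <| hpq _ _ <|
    birkhoffOrthogonal_of_mul_add_rightDeriv_eq_zero (c := -d / p (w₀ + u • w₁))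
      (by field_simp; ring)
  rwa [neg_div, neg_mul, neg_neg, div_mul_eq_mul_div, div_le_iff₀ hp] at h

lemma mul_eq_mul_of_birkhoffOrthogonal_iff_of_line
    (hpq : ∀ x y, p.BirkhoffOrthogonal x y ↔ q.BirkhoffOrthogonal x y) {w₀ w₁ : V}
    (hp : ∀ s : ℝ, 0 < p (w₀ + s • w₁)) (hq : ∀ s : ℝ, 0 < q (w₀ + s • w₁)) :
    q (w₀ + w₁) * p w₀ = q w₀ * p (w₀ + w₁) := by
  set A := fun s : ℝ => p (w₀ + s • w₁)
  set B := fun s : ℝ => q (w₀ + s • w₁)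
  have hA := p.convexOn_add_smul w₀ w₁
  have hB := q.convexOn_add_smul w₀ w₁
  have hderiv (u : ℝ) : HasDerivWithinAt (fun s => B s / A s) 0 (Ici u) u := by
    have h := (hB.hasDerivWithinAt_rightDeriv_of_mem_interior (x := u) (by simp)).div
      (hA.hasDerivWithinAt_rightDeriv_of_mem_interior (x := u) (by simp)) (hp u).ne'
    have hle := rightDeriv_mul_le_of_birkhoffOrthogonal_imp (fun x y => (hpq x y).1) w₀ w₁ u (hp u)
    have hge := rightDeriv_mul_le_of_birkhoffOrthogonal_imp (fun x y => (hpq x y).2) w₀ w₁ u (hq u)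
    refine (h.congr_deriv ?_).Ici_of_Ioi
    rw [div_eq_zero_iff]
    left
    linarith
  have hcont : Continuous fun s => B s / A s :=
    (continuousOn_univ.1 (hB.continuousOn isOpen_univ)).div
      (continuousOn_univ.1 (hA.continuousOn isOpen_univ)) fun s => (hp s).ne'
  have h := constant_of_has_deriv_right_zero hcont.continuousOn (fun u _ => hderiv u) 1
    ⟨zero_le_one, le_rfl⟩
  have hp₀ : p w₀ ≠ 0 := by simpa using (hp 0).ne'
  have hp₁ : p (w₀ + w₁) ≠ 0 := by simpa using (hp 1).ne'
  simp only [A, B, one_smul, zero_smul, add_zero] at h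
  rwa [div_eq_div_iff hp₁ hp₀] at h

lemma mul_eq_mul_of_linearIndependent
    (h : ∀ x y : V, LinearIndependent ℝ ![x, y] → q x * p y = q y * p x) (x y : V) :
    q x * p y = q y * p x := by
  by_cases hxy : LinearIndependent ℝ ![x, y]
  · exact h x y hxy
  obtain ⟨s, t, hst, hne⟩ : ∃ s t : ℝ, s • x + t • y = 0 ∧ ¬(s = 0 ∧ t = 0) := by
    simpa [LinearIndependent.pair_iff] using hxy
  rcases eq_or_ne t 0 with rfl | ht
  · have hx : x = 0 := by
      simp only [zero_smul, add_zero, and_true] at hst hne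
      exact (smul_eq_zero.1 hst).resolve_left hne
    simp [hx]
  · have hy : y = (-(s / t)) • x := by
      rw [neg_smul, eq_neg_iff_add_eq_zero, ← smul_right_inj ht, smul_zero, ← hst, smul_add,
        smul_smul, mul_div_cancel₀ _ ht, add_comm]
    rw [hy, map_smul_eq_mul, map_smul_eq_mul]
    ring

theorem mul_eq_mul_of_birkhoffOrthogonal_iff (hp : ∀ x, x ≠ 0 → 0 < p x)
    (hq : ∀ x, x ≠ 0 → 0 < q x) (hpq : ∀ x y, p.BirkhoffOrthogonal x y ↔ q.BirkhoffOrthogonal x y)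
    (x y : V) : q x * p y = q y * p x := by
  refine mul_eq_mul_of_linearIndependent (fun x y hxy => ?_) x y
  have hne (s : ℝ) : x + s • (y - x) ≠ 0 := by
    intro h0
    have := LinearIndependent.pair_iff.1 hxy (1 - s) s (by rw [← h0]; module)
    linarith [this.1, this.2]
  have h := mul_eq_mul_of_birkhoffOrthogonal_iff_of_line hpq (fun s => hp _ (hne s))
    (fun s => hq _ (hne s))
  rw [add_sub_cancel] at h
  linarith

end Seminorm

namespace Module.Basis

section Algebra

variable {R V : Type*} [CommRing R] [AddCommGroup V] [Module R V] (e : Basis (Fin 2) R V)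

noncomputable def detForm : V →ₗ[R] V →ₗ[R] R :=
  LinearMap.mk₂ R (fun u v => e.repr u 0 * e.repr v 1 - e.repr u 1 * e.repr v 0)
    (fun _ _ _ => by simp only [map_add, Finsupp.add_apply]; ring)
    (fun _ _ _ => by simp only [map_smul, Finsupp.smul_apply, smul_eq_mul]; ring)
    (fun _ _ _ => by simp only [map_add, Finsupp.add_apply]; ring)
    (fun _ _ _ => by simp only [map_smul, Finsupp.smul_apply, smul_eq_mul]; ring)

lemma detForm_apply (u v : V) :
    e.detForm u v = e.repr u 0 * e.repr v 1 - e.repr u 1 * e.repr v 0 := rfl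

lemma detForm_swap (u v : V) : e.detForm v u = -e.detForm u v := by
  simp only [detForm_apply]
  ring

@[simp] lemma detForm_self (u : V) : e.detForm u u = 0 := by
  simp only [detForm_apply]
  ring

lemma detForm_zero_one : e.detForm (e 0) (e 1) = 1 := by
  simp [detForm_apply]

lemma detForm_sub_sub_rotate (a₁ a₂ a₃ : V) :
    e.detForm (a₁ - a₂) (a₃ - a₂) = e.detForm (a₂ - a₃) (a₁ - a₃) := by
  simp only [map_sub, LinearMap.sub_apply, detForm_self]
  rw [e.detForm_swap a₁ a₂, e.detForm_swap a₁ a₃]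
  ring

lemma detForm_smul_eq_add (u v x : V) :
    e.detForm u v • x = e.detForm x v • u + e.detForm u x • v := by
  refine e.ext_elem fun i => ?_
  fin_cases i <;> simp [detForm_apply] <;> ring

lemma eq_zero_of_forall_detForm_eq_zero {y : V} (h : ∀ x, e.detForm x y = 0) : y = 0 := by
  have := e.detForm_smul_eq_add (e 0) (e 1) y
  rwa [detForm_zero_one, one_smul, h, e.detForm_swap (e 1) y, h, neg_zero, zero_smul, zero_smul,
    add_zero] at this

lemma detForm_ne_zero_of_linearIndependent [Nontrivial R] {x y : V}
    (h : LinearIndependent R ![x, y]) : e.detForm x y ≠ 0 := by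
  intro h0
  refine h.ne_zero 1 (e.eq_zero_of_forall_detForm_eq_zero fun z => ?_)
  have := e.detForm_smul_eq_add x y z
  rw [h0, zero_smul, eq_comm] at this
  exact (LinearIndependent.pair_iff.1 h _ _ this).1

lemma exists_detForm_eq (f : V →ₗ[R] R) : ∃ y, ∀ x, e.detForm x y = f x := by
  refine ⟨-f (e 1) • e 0 + f (e 0) • e 1, fun x => ?_⟩
  have hx := e.detForm_smul_eq_add (e 0) (e 1) x
  rw [detForm_zero_one, one_smul] at hx
  conv_rhs => rw [hx]
  simp only [map_add, map_smul, smul_eq_mul]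
  rw [e.detForm_swap x (e 0)]
  ring

end Algebra

/- The minimum is attained where `v + t • w` is a multiple of `x₀`. -/
lemma isLeast_seminorm_add_smul {V : Type*} [AddCommGroup V] [Module ℝ V]
    (e : Basis (Fin 2) ℝ V) {N : Seminorm ℝ V} {x₀ w : V} (hx₀ : N x₀ = 1)
    (hω : e.detForm x₀ w ≠ 0) (hle : ∀ u, |e.detForm u w| ≤ N u * |e.detForm x₀ w|) (v : V) :
    IsLeast (range fun t : ℝ => N (v + t • w)) (|e.detForm v w| / |e.detForm x₀ w|) := by
  refine ⟨⟨-(e.detForm x₀ v / e.detForm x₀ w), ?_⟩, ?_⟩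
  · have hv := e.detForm_smul_eq_add x₀ w v
    have : v + -(e.detForm x₀ v / e.detForm x₀ w) • w = (e.detForm v w / e.detForm x₀ w) • x₀ := by
      apply smul_right_injective V hω
      dsimp only
      rw [smul_add, hv, smul_smul, mul_neg, mul_div_cancel₀ _ hω, smul_smul,
        mul_div_cancel₀ _ hω, neg_smul]
      abel
    simp only [this, map_smul_eq_mul, hx₀, mul_one, Real.norm_eq_abs, abs_div]
  · rintro _ ⟨t, rfl⟩
    rw [div_le_iff₀ (abs_pos.2 hω)]
    simpa using hle (v + t • w)

variable {V : Type*} [NormedAddCommGroup V] [NormedSpace ℝ V] [FiniteDimensional ℝ V]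
  (e : Basis (Fin 2) ℝ V)

/-- `e.antinorm y = sup_{‖x‖ ≤ 1} |ω(x, y)|` for the determinant form `ω` of `e`. -/
noncomputable def antinorm : Seminorm ℝ V :=
  (normSeminorm ℝ (StrongDual ℝ V)).comp
    (LinearMap.toContinuousLinearMap.toLinearMap ∘ₗ e.detForm.flip)

lemma antinorm_apply (y : V) :
    e.antinorm y = ‖LinearMap.toContinuousLinearMap (e.detForm.flip y)‖ := rfl

lemma abs_detForm_le (x y : V) : |e.detForm x y| ≤ ‖x‖ * e.antinorm y := by
  rw [mul_comm]
  exact (LinearMap.toContinuousLinearMap (e.detForm.flip y)).le_opNorm x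

lemma antinorm_pos {y : V} (hy : y ≠ 0) : 0 < e.antinorm y := by
  rw [antinorm_apply, norm_pos_iff]
  intro h
  exact hy (e.eq_zero_of_forall_detForm_eq_zero fun x => by
    simpa using congrArg (fun f : StrongDual ℝ V => f x) h)

lemma exists_norm_eq_one_abs_detForm_eq [Nontrivial V] (y : V) :
    ∃ x : V, ‖x‖ = 1 ∧ |e.detForm x y| = e.antinorm y :=
  (LinearMap.toContinuousLinearMap (e.detForm.flip y)).exists_norm_eq_one_norm_apply_eq_opNorm

lemma exists_antinorm_eq_one_detForm_eq {y : V} (hy : y ≠ 0) :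
    ∃ x : V, e.antinorm x = 1 ∧ e.detForm y x = ‖y‖ := by
  obtain ⟨g, hg, hgy⟩ := exists_dual_vector ℝ y (norm_ne_zero_iff.2 hy)
  obtain ⟨x, hx⟩ := e.exists_detForm_eq g.toLinearMap
  have hgx : LinearMap.toContinuousLinearMap (e.detForm.flip x) = g := by
    ext z
    simp [hx]
  exact ⟨x, by rw [antinorm_apply, hgx, hg], by rw [hx]; exact_mod_cast hgy⟩

lemma isLeast_norm_add_smul (v : V) {w : V} (hw : w ≠ 0) :
    IsLeast (range fun t : ℝ => ‖v + t • w‖) (|e.detForm v w| / e.antinorm w) := by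
  have : Nontrivial V := nontrivial_of_ne w 0 hw
  obtain ⟨x₀, hx₀, hω⟩ := e.exists_norm_eq_one_abs_detForm_eq w
  rw [← hω]
  exact e.isLeast_seminorm_add_smul (N := normSeminorm ℝ V) hx₀
    (abs_pos.1 (hω ▸ e.antinorm_pos hw)) (fun u => hω ▸ e.abs_detForm_le u w) v

lemma isLeast_antinorm_add_smul (v : V) {w : V} (hw : w ≠ 0) :
    IsLeast (range fun t : ℝ => e.antinorm (v + t • w)) (|e.detForm v w| / ‖w‖) := by
  obtain ⟨x₀, hx₀, hω⟩ := e.exists_antinorm_eq_one_detForm_eq hw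
  have hω' : |e.detForm x₀ w| = ‖w‖ := by rw [detForm_swap, abs_neg, hω, abs_norm]
  rw [← hω']
  refine e.isLeast_seminorm_add_smul hx₀ (abs_pos.1 (hω' ▸ norm_pos_iff.2 hw)) (fun u => ?_) v
  rw [hω', detForm_swap, abs_neg, mul_comm]
  exact e.abs_detForm_le w u

lemma bNormal_iff (x y : V) : BNormal x y ↔ ‖x‖ * e.antinorm y = |e.detForm x y| := by
  rcases eq_or_ne y 0 with rfl | hy
  · simp [BNormal]
  rw [← eq_div_iff (e.antinorm_pos hy).ne']
  exact ⟨fun h => (((normSeminorm ℝ V).birkhoffOrthogonal_iff_isLeast).1 h).unique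
    (e.isLeast_norm_add_smul x hy), fun h t => h ▸ (e.isLeast_norm_add_smul x hy).2 ⟨t, rfl⟩⟩

lemma birkhoffOrthogonal_antinorm_iff (x y : V) :
    e.antinorm.BirkhoffOrthogonal x y ↔ e.antinorm x * ‖y‖ = |e.detForm x y| := by
  rcases eq_or_ne y 0 with rfl | hy
  · simp [Seminorm.BirkhoffOrthogonal]
  rw [← eq_div_iff (norm_ne_zero_iff.2 hy), Seminorm.birkhoffOrthogonal_iff_isLeast]
  exact ⟨fun h => h.unique (e.isLeast_antinorm_add_smul x hy),
    fun h => h ▸ e.isLeast_antinorm_add_smul x hy⟩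

lemma birkhoffOrthogonal_antinorm_iff_bNormal (x y : V) :
    e.antinorm.BirkhoffOrthogonal x y ↔ BNormal y x := by
  rw [birkhoffOrthogonal_antinorm_iff, bNormal_iff, e.detForm_swap y x, abs_neg, mul_comm]

lemma distToLine_eq (p q r : V) (hqr : q ≠ r) :
    distToLine p q r = |e.detForm (p - q) (r - q)| / e.antinorm (r - q) := by
  have hset : {d : ℝ | ∃ t : ℝ, d = ‖p - (q + t • (r - q))‖} =
      range fun t : ℝ => ‖(p - q) + t • (r - q)‖ := by
    ext d
    constructor
    · rintro ⟨t, rfl⟩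
      exact ⟨-t, by simp only; congr 1; module⟩
    · rintro ⟨t, rfl⟩
      exact ⟨-t, by simp only; congr 1; module⟩
  rw [distToLine, hset, (e.isLeast_norm_add_smul _ (sub_ne_zero.2 hqr.symm)).csInf_eq]

lemma half_mul_norm_mul_distToLine (p q r : V) :
    1 / 2 * ‖q - r‖ * distToLine p q r =
      ‖r - q‖ / e.antinorm (r - q) * |e.detForm (p - q) (r - q)| / 2 := by
  rcases eq_or_ne q r with rfl | hqr
  · simp
  rw [e.distToLine_eq p q r hqr, norm_sub_rev]
  ring

lemma norm_div_antinorm_mul_abs_detForm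
    (hprop : ∀ x y : V, e.antinorm x * ‖y‖ = e.antinorm y * ‖x‖) (x v : V) :
    ‖v‖ / e.antinorm v * |e.detForm x v| = ‖e 0‖ / e.antinorm (e 0) * |e.detForm x v| := by
  rcases eq_or_ne v 0 with rfl | hv
  · simp
  congr 1
  rw [div_eq_div_iff (e.antinorm_pos hv).ne' (e.antinorm_pos (e.ne_zero 0)).ne']
  linarith [hprop v (e 0)]

lemma radon_iff_antinorm_mul_norm_comm :
    (∀ x y : V, x ≠ 0 → y ≠ 0 → BNormal x y → BNormal y x) ↔
      ∀ x y : V, e.antinorm x * ‖y‖ = e.antinorm y * ‖x‖ := by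
  constructor
  · intro hradon
    have hsymm (x y : V) (h : BNormal x y) : BNormal y x := by
      rcases eq_or_ne x 0 with rfl | hx
      · simp [BNormal]
      rcases eq_or_ne y 0 with rfl | hy
      · simp [BNormal]
      exact hradon x y hx hy h
    exact (normSeminorm ℝ V).mul_eq_mul_of_birkhoffOrthogonal_iff (fun _ => norm_pos_iff.2)
      (fun _ => e.antinorm_pos) fun x y => by
        rw [birkhoffOrthogonal_antinorm_iff_bNormal]
        exact ⟨hsymm x y, hsymm y x⟩
  · intro hprop x y _ _ h
    rw [bNormal_iff] at h ⊢
    rw [e.detForm_swap, abs_neg, ← h]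
    linarith [hprop x y]

lemma halfArea_eq_iff_antinorm_mul_norm_comm :
    (∀ a b c : V,
      (1 / 2) * ‖b - c‖ * distToLine a b c = (1 / 2) * ‖c - a‖ * distToLine b c a ∧
      (1 / 2) * ‖c - a‖ * distToLine b c a = (1 / 2) * ‖a - b‖ * distToLine c a b) ↔
      ∀ x y : V, e.antinorm x * ‖y‖ = e.antinorm y * ‖x‖ := by
  constructor
  · intro harea
    refine (normSeminorm ℝ V).mul_eq_mul_of_linearIndependent (q := e.antinorm) fun x y hxy => ?_
    have hx := e.antinorm_pos (y := x) (hxy.ne_zero 0)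
    have hy := e.antinorm_pos (y := y) (hxy.ne_zero 1)
    have hω : |e.detForm x y| ≠ 0 := abs_ne_zero.2 (e.detForm_ne_zero_of_linearIndependent hxy)
    have h := (harea 0 x y).2
    rw [e.half_mul_norm_mul_distToLine, e.half_mul_norm_mul_distToLine] at h
    simp only [zero_sub, sub_zero, norm_neg, map_neg_eq_map, map_neg, map_sub, LinearMap.sub_apply,
      detForm_self, abs_neg] at h
    rw [e.detForm_swap x y, abs_neg] at h
    have h' := mul_right_cancel₀ hω (by linarith : ‖y‖ / e.antinorm y * |e.detForm x y| =
      ‖x‖ / e.antinorm x * |e.detForm x y|)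
    rw [div_eq_div_iff hy.ne' hx.ne'] at h'
    show e.antinorm x * ‖y‖ = e.antinorm y * ‖x‖
    linarith
  · intro hprop a b c
    simp only [e.half_mul_norm_mul_distToLine, e.norm_div_antinorm_mul_abs_detForm hprop]
    rw [e.detForm_sub_sub_rotate a b c, e.detForm_sub_sub_rotate b c a]
    exact ⟨rfl, rfl⟩

end Module.Basis

/-- (Gołąb–Busemann / Tamássy) A norm on the plane is Radon iff for every triangle
`a b c` the quantity `(1/2)·(length of a side)·(distance to opposite vertex)` is
independent of the choice of side. -/
theorem stmt13 {V : Type*} [NormedAddCommGroup V] [NormedSpace ℝ V]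
    (hdim : Module.finrank ℝ V = 2) :
    (∀ x y : V, x ≠ 0 → y ≠ 0 → BNormal x y → BNormal y x) ↔
    (∀ a b c : V,
      (1 / 2) * ‖b - c‖ * distToLine a b c = (1 / 2) * ‖c - a‖ * distToLine b c a ∧
      (1 / 2) * ‖c - a‖ * distToLine b c a = (1 / 2) * ‖a - b‖ * distToLine c a b) := by
  have : FiniteDimensional ℝ V := .of_finrank_pos (by omega)
  let e := Module.finBasisOfFinrankEq ℝ V hdim
  exact e.radon_iff_antinorm_mul_norm_comm.trans e.halfArea_eq_iff_antinorm_mul_norm_comm.symm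
end

section
/- In a Minkowski plane, the Busemann angular bisector of an angle with respect to the norm coincides with the Glogovskii angular bisector of that angle with respect to the antinorm. -/
section Helpers

variable {V : Type*} [NormedAddCommGroup V] [NormedSpace ℝ V]

lemma anorm_eq_opNorm [FiniteDimensional ℝ V] [Nontrivial V]
    (ω : V →ₗ[ℝ] V →ₗ[ℝ] ℝ) (x : V) :
    anorm ω x = ‖LinearMap.toContinuousLinearMap (ω x)‖ := by
  set f := LinearMap.toContinuousLinearMap (ω x) with hf
  have hfy : ∀ y : V, f y = ω x y := fun y => rfl
  set S := {r : ℝ | ∃ y : V, ‖y‖ = 1 ∧ r = ω x y} with hS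
  obtain ⟨v, hv⟩ := exists_ne (0 : V)
  have hvnorm : ‖(‖v‖⁻¹ • v)‖ = 1 := by
    rw [norm_smul, norm_inv, norm_norm, inv_mul_cancel₀ (norm_ne_zero_iff.2 hv)]
  have hne : S.Nonempty := ⟨ω x (‖v‖⁻¹ • v), ‖v‖⁻¹ • v, hvnorm, rfl⟩
  have hbdd : ∀ r ∈ S, r ≤ ‖f‖ := by
    rintro r ⟨y, hy, rfl⟩
    calc ω x y ≤ |ω x y| := le_abs_self _
    _ = ‖f y‖ := by rw [hfy]; rfl
    _ ≤ ‖f‖ * ‖y‖ := f.le_opNorm y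
    _ = ‖f‖ := by rw [hy, mul_one]
  have hBdd : BddAbove S := ⟨‖f‖, hbdd⟩
  have hmem : ∀ y : V, ‖y‖ = 1 → |ω x y| ≤ sSup S := by
    intro y hy
    rcases abs_cases (ω x y) with ⟨h, _⟩ | ⟨h, _⟩
    · rw [h]; exact le_csSup hBdd ⟨y, hy, rfl⟩
    · rw [h]
      refine le_csSup hBdd ⟨-y, by rwa [norm_neg], ?_⟩
      rw [map_neg]
  refine le_antisymm (csSup_le hne hbdd) ?_
  refine f.opNorm_le_bound ?_ ?_
  · exact le_trans (abs_nonneg _) (hmem _ hvnorm)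
  · intro z
    rcases eq_or_ne z 0 with rfl | hz
    · simp
    · have h1 : ‖(‖z‖⁻¹ • z)‖ = 1 := by
        rw [norm_smul, norm_inv, norm_norm, inv_mul_cancel₀ (norm_ne_zero_iff.2 hz)]
      have := hmem _ h1
      have h2 : |ω x (‖z‖⁻¹ • z)| = ‖z‖⁻¹ * |ω x z| := by
        rw [map_smul]; simp [abs_of_nonneg, abs_mul, abs_of_nonneg (inv_nonneg.2 (norm_nonneg z))]
      rw [h2] at this
      have h3 : ‖f z‖ = |ω x z| := by rw [hfy]; rfl
      rw [h3]
      calc |ω x z| = ‖z‖ * (‖z‖⁻¹ * |ω x z|) := by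
            rw [← mul_assoc, mul_inv_cancel₀ (norm_ne_zero_iff.2 hz), one_mul]
      _ ≤ ‖z‖ * sSup S := by
            exact mul_le_mul_of_nonneg_left this (norm_nonneg z)
      _ = sSup S * ‖z‖ := mul_comm _ _

lemma key_dist [FiniteDimensional ℝ V]
    (ω : V →ₗ[ℝ] V →ₗ[ℝ] ℝ) (halt : ∀ x : V, ω x x = 0)
    (u w p : V) (hu : ‖u‖ = 1) (huw : ω u w ≠ 0)
    (hspan : Submodule.span ℝ ({u, w} : Set V) = ⊤) :
    sInf {d : ℝ | ∃ t : ℝ, d = anorm ω (p - t • u)} = |ω p u| := by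
  have hu0 : u ≠ 0 := by intro h; rw [h, norm_zero] at hu; exact zero_ne_one hu
  have : Nontrivial V := ⟨u, 0, hu0⟩
  set f := LinearMap.toContinuousLinearMap (ω p) with hfdef
  set g := LinearMap.toContinuousLinearMap (ω u) with hgdef
  have hfy : ∀ y : V, f y = ω p y := fun y => rfl
  have hgy : ∀ y : V, g y = ω u y := fun y => rfl
  have hclm : ∀ t : ℝ, anorm ω (p - t • u) = ‖f - t • g‖ := by
    intro t
    rw [anorm_eq_opNorm]
    congr 1
    rw [map_sub, map_smul, map_sub, map_smul]
  have lower : ∀ t : ℝ, |ω p u| ≤ ‖f - t • g‖ := by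
    intro t
    have h1 : (f - t • g) u = ω p u := by
      simp [hfy, hgy, halt u]
    calc |ω p u| = ‖(f - t • g) u‖ := by rw [h1]; rfl
    _ ≤ ‖f - t • g‖ * ‖u‖ := (f - t • g).le_opNorm u
    _ = ‖f - t • g‖ := by rw [hu, mul_one]
  set P : Submodule ℝ V := Submodule.span ℝ {u} with hP
  have hu_mem : u ∈ P := Submodule.mem_span_singleton_self u
  set f₀ : P →L[ℝ] ℝ := f.comp P.subtypeL with hf₀
  have hf₀norm : ‖f₀‖ = |ω p u| := by
    refine le_antisymm (f₀.opNorm_le_bound (abs_nonneg _) ?_) ?_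
    · rintro ⟨x, hx⟩
      obtain ⟨c, rfl⟩ := Submodule.mem_span_singleton.1 hx
      have h1 : f₀ ⟨c • u, hx⟩ = c * ω p u := by
        simp [hf₀, hfy]
      have h2 : ‖(⟨c • u, hx⟩ : P)‖ = |c| := by
        change ‖c • u‖ = |c|
        rw [norm_smul, hu, mul_one, Real.norm_eq_abs]
      rw [h1, h2, Real.norm_eq_abs, abs_mul]
      exact le_of_eq (mul_comm _ _)
    · have h1 : f₀ ⟨u, hu_mem⟩ = ω p u := by simp [hf₀, hfy]
      have h2 : ‖(⟨u, hu_mem⟩ : P)‖ = 1 := by change ‖u‖ = 1; exact hu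
      calc |ω p u| = ‖f₀ ⟨u, hu_mem⟩‖ := by rw [h1]; rfl
      _ ≤ ‖f₀‖ * ‖(⟨u, hu_mem⟩ : P)‖ := f₀.le_opNorm _
      _ = ‖f₀‖ := by rw [h2, mul_one]
  obtain ⟨F, hFext, hFnorm⟩ := exists_extension_norm_eq P f₀
  have hFu : F u = ω p u := by
    have := hFext ⟨u, hu_mem⟩
    simpa [hf₀, hfy] using this
  set t₀ : ℝ := (f w - F w) / ω u w with ht₀
  have h4 : ∀ y : V, f y - F y - t₀ * g y = 0 := by
    have hsub : ({u, w} : Set V) ⊆ ↑(LinearMap.ker ((f : V →ₗ[ℝ] ℝ) - (F : V →ₗ[ℝ] ℝ) - t₀ • (g : V →ₗ[ℝ] ℝ))) := by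
      rintro y (rfl | rfl)
      · simp only [SetLike.mem_coe, LinearMap.mem_ker, LinearMap.sub_apply,
          LinearMap.smul_apply, ContinuousLinearMap.coe_coe, smul_eq_mul, hfy, hgy, halt, hFu]
        ring
      · simp only [SetLike.mem_coe, LinearMap.mem_ker, LinearMap.sub_apply,
          LinearMap.smul_apply, ContinuousLinearMap.coe_coe, smul_eq_mul]
        rw [hgy, ht₀, div_mul_cancel₀ _ huw]
        ring
    have hle := Submodule.span_le.2 hsub
    rw [hspan] at hle
    intro y
    have := hle (Submodule.mem_top (x := y))
    simpa using this
  have hFt : f - t₀ • g = F := by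
    ext y
    have := h4 y
    simp only [ContinuousLinearMap.sub_apply, ContinuousLinearMap.smul_apply, smul_eq_mul]
    linarith
  refine le_antisymm ?_ ?_
  · refine csInf_le ⟨|ω p u|, ?_⟩ ⟨t₀, ?_⟩
    · rintro d ⟨t, rfl⟩
      rw [hclm t]; exact lower t
    · rw [hclm t₀, hFt, hFnorm, hf₀norm]
  · refine le_csInf ⟨anorm ω (p - (0:ℝ) • u), 0, rfl⟩ ?_
    rintro d ⟨t, rfl⟩
    rw [hclm t]; exact lower t

end Helpers

/-- (Düvelmeyer) The Busemann angular bisector (in the norm) of the angle at `a` with unit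
side directions `u` and `w` coincides with the Glogovskii angular bisector of this angle
with respect to the antinorm: the ray from `a` in direction `u + w` equals the set of
points of the angle whose antinorm-distances to the two lines containing the sides agree. -/
theorem stmt14 {V : Type*} [NormedAddCommGroup V] [NormedSpace ℝ V]
    (hdim : Module.finrank ℝ V = 2)
    (ω : V →ₗ[ℝ] V →ₗ[ℝ] ℝ)
    (halt : ∀ x : V, ω x x = 0)
    (hnd : ∀ a : V, (∀ y : V, ω a y = 0) → a = 0)
    (a u w : V) (hu : ‖u‖ = 1) (hw : ‖w‖ = 1)
    (hind : LinearIndependent ℝ ![u, w]) :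
    {x : V | ∃ t : ℝ, 0 ≤ t ∧ x = a + t • (u + w)} =
    {x : V | (∃ s t : ℝ, 0 ≤ s ∧ 0 ≤ t ∧ x = a + s • u + t • w) ∧
      sInf {d : ℝ | ∃ t : ℝ, d = anorm ω (x - (a + t • u))} =
      sInf {d : ℝ | ∃ t : ℝ, d = anorm ω (x - (a + t • w))}} := by
  have hfin : FiniteDimensional ℝ V := .of_finrank_eq_succ hdim
  have hcard : Fintype.card (Fin 2) = Module.finrank ℝ V := by simp [hdim]
  have hb : ⇑(basisOfLinearIndependentOfCardEqFinrank hind hcard) = ![u, w] :=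
    coe_basisOfLinearIndependentOfCardEqFinrank hind hcard
  have hrange : Set.range ![u, w] = ({u, w} : Set V) := by
    ext y
    simp [Fin.exists_fin_two]
    tauto
  have hspan : Submodule.span ℝ ({u, w} : Set V) = ⊤ := by
    rw [← hrange, ← hb]
    exact (basisOfLinearIndependentOfCardEqFinrank hind hcard).span_eq
  have hspan' : Submodule.span ℝ ({w, u} : Set V) = ⊤ := by
    rw [Set.pair_comm]; exact hspan
  have hskew : ∀ x y : V, ω x y = -ω y x := by
    intro x y
    have h := halt (x + y)
    simp only [map_add, LinearMap.add_apply, halt] at h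
    linarith
  have huw : ω u w ≠ 0 := by
    intro h0
    have hzero : ∀ y : V, ω u y = 0 := by
      intro y
      have hy : y ∈ Submodule.span ℝ ({u, w} : Set V) := hspan ▸ Submodule.mem_top
      refine Submodule.span_induction ?_ ?_ ?_ ?_ hy
      · rintro z (rfl | rfl)
        · exact halt z
        · exact h0
      · exact map_zero _
      · intro z₁ z₂ _ _ h1 h2; rw [map_add, h1, h2, add_zero]
      · intro c z _ h1; rw [map_smul, h1, smul_zero]
    have := hnd u hzero
    rw [this, norm_zero] at hu
    exact zero_ne_one hu
  have hwu : ω w u ≠ 0 := by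
    rw [hskew]; simpa using huw
  have e1 : ∀ (p c v : V), {d : ℝ | ∃ t : ℝ, d = anorm ω (p - (c + t • v))} =
      {d : ℝ | ∃ t : ℝ, d = anorm ω (p - c - t • v)} := by
    intro p c v
    ext d
    simp only [Set.mem_setOf_eq, sub_add_eq_sub_sub]
  ext x
  simp only [Set.mem_setOf_eq]
  rw [e1, e1, key_dist ω halt u w (x - a) hu huw hspan,
    key_dist ω halt w u (x - a) hw hwu hspan']
  constructor
  · rintro ⟨t, ht, rfl⟩
    have hxa : a + t • (u + w) - a = t • u + t • w := by
      rw [smul_add]; abel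
    refine ⟨⟨t, t, ht, ht, by rw [smul_add]; abel⟩, ?_⟩
    rw [hxa]
    simp only [map_add, map_smul, LinearMap.add_apply, LinearMap.smul_apply, smul_eq_mul,
      halt]
    rw [hskew u w]
    simp [abs_mul]
  · rintro ⟨⟨s, t, hs, ht, rfl⟩, heq⟩
    have hxa : a + s • u + t • w - a = s • u + t • w := by abel
    rw [hxa] at heq
    simp only [map_add, map_smul, LinearMap.add_apply, LinearMap.smul_apply, smul_eq_mul,
      halt] at heq
    rw [hskew u w] at heq
    have heq2 : |t| * |ω w u| = |s| * |ω w u| := by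
      have h1 : |t * ω w u| = |t| * |ω w u| := abs_mul _ _
      have h2 : |s * -ω w u| = |s| * |ω w u| := by rw [abs_mul, abs_neg]
      calc |t| * |ω w u| = |t * ω w u| := h1.symm
      _ = |s * -ω w u| := by rw [show t * ω w u = s * 0 + t * ω w u by ring, heq]; ring_nf
      _ = |s| * |ω w u| := h2
    have hts : t = s := by
      have := mul_right_cancel₀ (abs_ne_zero.2 hwu) heq2
      rwa [abs_of_nonneg ht, abs_of_nonneg hs] at this
    exact ⟨s, hs, by rw [hts, smul_add]; abel⟩
end

section
/- Let x and y be unit vectors in a Minkowski plane. Then any point on the line through the origin and y that is nearest to x in the antinorm lies in the unit ball of the norm. -/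
open Module

namespace LinearMap.IsAlt

variable {K V : Type*} [Field K] [AddCommGroup V] [Module K V] {ω : V →ₗ[K] V →ₗ[K] K}

theorem smul_add_smul_add_smul_eq_zero (hω : ω.IsAlt) (hdim : finrank K V = 2) (a b c : V) :
    ω a b • c + ω b c • a + ω c a • b = 0 := by
  have : FiniteDimensional K V := .of_finrank_pos (by omega)
  let e := finBasisOfFinrankEq K V hdim
  have h10 : ω (e 1) (e 0) = -ω (e 0) (e 1) := (hω.neg _ _).symm
  rw [← e.sum_repr a, ← e.sum_repr b, ← e.sum_repr c]
  simp only [Fin.sum_univ_two, map_add, map_smul, LinearMap.add_apply, LinearMap.smul_apply,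
    smul_eq_mul, hω.self_eq_zero, h10]
  module

theorem apply_smul_sub_eq_smul (hω : ω.IsAlt) (hdim : finrank K V = 2) (g : V →ₗ[K] K)
    {x y : V} (hgy : g y = 1) : ω (g x • y - x) = ω y x • g := by
  ext v
  have h := congrArg g (hω.smul_add_smul_add_smul_eq_zero hdim y x v)
  simp only [map_add, map_smul, smul_eq_mul, hgy, map_zero] at h
  have hvy := hω.neg v y
  simp only [map_sub, map_smul, LinearMap.sub_apply, LinearMap.smul_apply, smul_eq_mul]
  linear_combination -h - g x * hvy

end LinearMap.IsAlt

section Antinorm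

variable {V : Type*} [NormedAddCommGroup V] [NormedSpace ℝ V]
  {ω : V →ₗ[ℝ] V →ₗ[ℝ] ℝ}

lemma anorm_le_s18 {v : V} {C : ℝ} (hC : 0 ≤ C) (h : ∀ w : V, ‖w‖ = 1 → ω v w ≤ C) :
    anorm ω v ≤ C :=
  Real.sSup_le (by rintro r ⟨w, hw, rfl⟩; exact h w hw) hC

lemma anorm_smul_sub_le (hω : ω.IsAlt) (hdim : finrank ℝ V = 2) {g : StrongDual ℝ V}
    (hg : ‖g‖ ≤ 1) {x y : V} (hgy : g y = 1) : anorm ω (g x • y - x) ≤ |ω y x| := by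
  refine anorm_le_s18 (abs_nonneg _) fun w hw ↦ ?_
  have hgw : |g w| ≤ 1 := by simpa [hw] using g.le_opNorm w |>.trans (by simpa [hw] using hg)
  rw [show g x = (g : V →ₗ[ℝ] ℝ) x from rfl, hω.apply_smul_sub_eq_smul hdim _ hgy]
  calc ω y x * g w ≤ |ω y x| * |g w| := abs_mul (ω y x) (g w) ▸ le_abs_self _
    _ ≤ |ω y x| := mul_le_of_le_one_right (abs_nonneg _) hgw

variable [FiniteDimensional ℝ V]

variable (ω) in
lemma bddAbove_anorm_set (v : V) :
    BddAbove {r : ℝ | ∃ w : V, ‖w‖ = 1 ∧ r = ω v w} := by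
  refine ⟨‖LinearMap.toContinuousLinearMap (ω v)‖, ?_⟩
  rintro r ⟨w, hw, rfl⟩
  simpa [hw] using (LinearMap.toContinuousLinearMap (ω v)).le_opNorm w |>.trans' (le_abs_self _)

lemma le_anorm (v : V) {w : V} (hw : ‖w‖ = 1) : ω v w ≤ anorm ω v :=
  le_csSup (bddAbove_anorm_set ω v) ⟨w, hw, rfl⟩

lemma abs_le_anorm (v : V) {w : V} (hw : ‖w‖ = 1) : |ω v w| ≤ anorm ω v :=
  abs_le'.mpr ⟨le_anorm v hw, by simpa using le_anorm v (w := -w) (by simpa using hw)⟩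

lemma eq_zero_of_anorm_nonpos (hω : ω.SeparatingLeft) {v : V} (h : anorm ω v ≤ 0) : v = 0 := by
  refine hω v fun w ↦ ?_
  rcases eq_or_ne w 0 with rfl | hw
  · simp
  have hu : ‖‖w‖⁻¹ • w‖ = 1 := norm_smul_inv_norm hw
  have := (abs_le_anorm v hu).trans h
  rw [map_smul, smul_eq_mul, abs_mul, abs_inv, abs_norm, ← mul_zero ‖w‖⁻¹] at this
  exact abs_nonpos_iff.mp (le_of_mul_le_mul_left this (by positivity))

lemma abs_mul_le_anorm_smul_sub (hω : ω.IsAlt) {x : V} (hx : ‖x‖ = 1) (y : V) (lam : ℝ) :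
    |lam| * |ω y x| ≤ anorm ω (lam • y - x) := by
  have := abs_le_anorm (ω := ω) (lam • y - x) hx
  simpa [hω.self_eq_zero, abs_mul] using this

end Antinorm

/-- Any point on the line `{t • y}` nearest (in the antinorm) to a unit vector `x` lies in
the unit ball of the norm. -/
theorem stmt18 {V : Type*} [NormedAddCommGroup V] [NormedSpace ℝ V]
    (hdim : Module.finrank ℝ V = 2)
    (ω : V →ₗ[ℝ] V →ₗ[ℝ] ℝ)
    (halt : ∀ x : V, ω x x = 0)
    (hnd : ∀ a : V, (∀ y : V, ω a y = 0) → a = 0)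
    (x y : V) (hx : ‖x‖ = 1) (hy : ‖y‖ = 1)
    (m : V) (hm : ∃ lam : ℝ, m = lam • y)
    (hnear : ∀ lam : ℝ, anorm ω (m - x) ≤ anorm ω (lam • y - x)) :
    ‖m‖ ≤ 1 := by
  have : FiniteDimensional ℝ V := .of_finrank_pos (by omega)
  obtain ⟨lam, rfl⟩ := hm
  obtain ⟨g, hg, hgy⟩ := exists_dual_vector ℝ y (by simp [hy])
  have hupper : anorm ω (lam • y - x) ≤ |ω y x| :=
    (hnear (g x)).trans (anorm_smul_sub_le halt hdim hg.le (by simpa [hy] using hgy))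
  have hlower := abs_mul_le_anorm_smul_sub halt hx y lam
  rcases eq_or_ne (ω y x) 0 with h0 | h0
  · have hm : lam • y - x = 0 := eq_zero_of_anorm_nonpos hnd (by simpa [h0] using hupper)
    rw [sub_eq_zero.mp hm, hx]
  · rw [norm_smul, hy, mul_one, Real.norm_eq_abs]
    exact le_of_mul_le_mul_right (by linarith) (abs_pos.mpr h0)
end
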